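/- arXiv:2106.02212 — 4 statements merged into one kernel-verified Lean document; each statement's English description precedes it below -/
import Mathlib

section
/- Fix a fuzzifier α > 1, an integer k ≥ 1, points x_1,…,x_n ∈ ℝ^d and centers μ_1,…,μ_k ∈ ℝ^d such that every distance d_{iℓ} := ‖x_i − μ_ℓ‖₂ is strictly positive. Define U*_{ij} = ( Σ_{ℓ=1}^k (d_{ij}/d_{iℓ})^{2/(α−1)} )^{−1} for i ∈ [n], j ∈ [k]. Then U* is a feasible membership matrix (every entry lies in [0,1] and every row sums to 1), and for every feasible membership matrix V one has J_fm(x, μ, U*) ≤ J_fm(x, μ, V). -/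
open Finset

/-!
In row `i`, with `c j = ‖x i - μ j‖ ^ 2`, the weights `U* j` are proportional to
`c j ^ (-1 / (α - 1))`, so `U* j ^ (α - 1) * c j` does not depend on `j`: `U*` is a stationary
point of the Lagrangian on the simplex. By convexity, `t ^ α` lies above its tangent line at
`U* j`; weighting these tangent bounds by `c j` and summing, the linear terms cancel because
both rows sum to one.
-/

theorem rpow_add_mul_rpow_sub_one_mul_sub_le {p u t : ℝ} (hp : 1 ≤ p) (hu : 0 < u)
    (ht : 0 ≤ t) : u ^ p + p * u ^ (p - 1) * (t - u) ≤ t ^ p := by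
  have bernoulli := one_add_mul_self_le_rpow_one_add (s := t / u - 1)
    (by linarith [div_nonneg ht hu.le]) hp
  rw [add_sub_cancel, Real.div_rpow ht hu.le] at bernoulli
  have hup : 0 < u ^ p := Real.rpow_pos_of_pos hu p
  calc u ^ p + p * u ^ (p - 1) * (t - u) = u ^ p * (1 + p * (t / u - 1)) := by
        rw [Real.rpow_sub_one hu.ne']; field_simp
    _ ≤ u ^ p * (t ^ p / u ^ p) := mul_le_mul_of_nonneg_left bernoulli hup.le
    _ = t ^ p := mul_div_cancel₀ _ hup.ne'

section

variable {ι : Type*} [Fintype ι]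

theorem sum_rpow_mul_le_of_rpow_sub_one_mul_eq {α lam : ℝ} (hα : 1 ≤ α) {c u v : ι → ℝ}
    (hc : ∀ j, 0 ≤ c j) (hu : ∀ j, 0 < u j) (hv : ∀ j, 0 ≤ v j)
    (hsum : ∑ j, v j = ∑ j, u j) (hstat : ∀ j, u j ^ (α - 1) * c j = lam) :
    ∑ j, u j ^ α * c j ≤ ∑ j, v j ^ α * c j := by
  have tangent : ∀ j, u j ^ α * c j + α * lam * (v j - u j) ≤ v j ^ α * c j := fun j => by
    rw [← hstat j]
    nlinarith [mul_le_mul_of_nonneg_right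
      (rpow_add_mul_rpow_sub_one_mul_sub_le hα (hu j) (hv j)) (hc j)]
  calc ∑ j, u j ^ α * c j = ∑ j, (u j ^ α * c j + α * lam * (v j - u j)) := by
        rw [sum_add_distrib, ← mul_sum, sum_sub_distrib, hsum, sub_self, mul_zero, add_zero]
    _ ≤ ∑ j, v j ^ α * c j := sum_le_sum fun j _ => tangent j

theorem inv_sum_div_rpow_eq {a : ι → ℝ} (ha : ∀ ℓ, 0 < a ℓ) (q : ℝ) (j : ι) :
    (∑ ℓ, (a j / a ℓ) ^ q)⁻¹ = a j ^ (-q) / ∑ ℓ, a ℓ ^ (-q) := by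
  have hterm : ∀ ℓ, (a j / a ℓ) ^ q = a j ^ q * a ℓ ^ (-q) := fun ℓ => by
    rw [Real.div_rpow (ha j).le (ha ℓ).le, Real.rpow_neg (ha ℓ).le, div_eq_mul_inv]
  rw [sum_congr rfl fun ℓ _ => hterm ℓ, ← mul_sum, mul_inv, Real.rpow_neg (ha j).le,
    div_eq_mul_inv]

theorem div_sum_mem_Icc {w : ι → ℝ} (hw : ∀ j, 0 ≤ w j) (j : ι) :
    w j / ∑ ℓ, w ℓ ∈ Set.Icc (0 : ℝ) 1 :=
  ⟨div_nonneg (hw j) (sum_nonneg fun ℓ _ => hw ℓ),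
    div_le_one_of_le₀ (single_le_sum (fun ℓ _ => hw ℓ) (mem_univ j))
      (sum_nonneg fun ℓ _ => hw ℓ)⟩

theorem sum_div_sum_self {w : ι → ℝ} (hw : ∑ ℓ, w ℓ ≠ 0) : ∑ j, w j / ∑ ℓ, w ℓ = 1 := by
  rw [← sum_div, div_self hw]

end

theorem rpow_div_rpow_sub_one_mul_sq {α a S : ℝ} (hα : α ≠ 1) (ha : 0 < a) (hS : 0 < S) :
    (a ^ (-(2 / (α - 1))) / S) ^ (α - 1) * a ^ 2 = (S ^ (α - 1))⁻¹ := by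
  have hα1 : α - 1 ≠ 0 := sub_ne_zero.mpr hα
  rw [Real.div_rpow (Real.rpow_pos_of_pos ha _).le hS.le, ← Real.rpow_mul ha.le,
    neg_mul, div_mul_cancel₀ _ hα1, Real.rpow_neg ha.le, Real.rpow_two]
  field_simp

/-- Optimality of the closed-form membership weights for fixed centers
(fuzzy k-means, Eq. (3) in the paper). -/
theorem fuzzy_membership_optimal {d n k : ℕ} (hk : 1 ≤ k) {α : ℝ} (hα : 1 < α)
    (x : Fin n → EuclideanSpace ℝ (Fin d)) (μ : Fin k → EuclideanSpace ℝ (Fin d))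
    (hpos : ∀ (i : Fin n) (ℓ : Fin k), 0 < ‖x i - μ ℓ‖)
    (Ustar : Fin n → Fin k → ℝ)
    (hUstar : ∀ i j, Ustar i j =
      (∑ ℓ : Fin k, (‖x i - μ j‖ / ‖x i - μ ℓ‖) ^ (2 / (α - 1)))⁻¹) :
    (∀ i j, Ustar i j ∈ Set.Icc (0 : ℝ) 1) ∧
    (∀ i, ∑ j, Ustar i j = 1) ∧
    ∀ V : Fin n → Fin k → ℝ,
      (∀ i j, V i j ∈ Set.Icc (0 : ℝ) 1) → (∀ i, ∑ j, V i j = 1) →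
      (∑ i, ∑ j, Ustar i j ^ α * ‖x i - μ j‖ ^ 2) ≤
        ∑ i, ∑ j, V i j ^ α * ‖x i - μ j‖ ^ 2 := by
  have : Nonempty (Fin k) := ⟨⟨0, hk⟩⟩
  set w : Fin n → Fin k → ℝ := fun i j => ‖x i - μ j‖ ^ (-(2 / (α - 1)))
  have hw : ∀ i j, 0 < w i j := fun i j => Real.rpow_pos_of_pos (hpos i j) _
  have hS : ∀ i, 0 < ∑ ℓ, w i ℓ := fun i => sum_pos (fun ℓ _ => hw i ℓ) univ_nonempty
  have hU : ∀ i j, Ustar i j = w i j / ∑ ℓ, w i ℓ := fun i j =>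
    (hUstar i j).trans (inv_sum_div_rpow_eq (hpos i) _ j)
  have hrow : ∀ i, ∑ j, Ustar i j = 1 := fun i => by
    simp only [hU]; exact sum_div_sum_self (hS i).ne'
  refine ⟨fun i j => hU i j ▸ div_sum_mem_Icc (fun ℓ => (hw i ℓ).le) j, hrow, ?_⟩
  intro V hV hV1
  refine sum_le_sum fun i _ => sum_rpow_mul_le_of_rpow_sub_one_mul_eq
    (lam := ((∑ ℓ, w i ℓ) ^ (α - 1))⁻¹) hα.le
    (fun j => sq_nonneg _) (fun j => hU i j ▸ div_pos (hw i j) (hS i)) (fun j => (hV i j).1)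
    ((hV1 i).trans (hrow i).symm) (fun j => ?_)
  rw [hU]
  exact rpow_div_rpow_sub_one_mul_sq hα.ne' (hpos i j) (hS i)
end

section
/- Let k ≥ 2, n ≥ 1, α ≥ 1, R > 0, ε₁, ε₂ ≥ 0. Suppose x_1,…,x_n and μ_1,…,μ_k all lie in the closed ball B(0,R) ⊂ ℝ^d, U is a feasible membership matrix, and min_{i≠j} ‖μ_i − μ_j‖₂² > 8Rε₁ + 4ε₁². Let μ̂_1,…,μ̂_k ∈ ℝ^d and Û ∈ [0,1]^{n×k} satisfy ‖μ̂_j − μ_j‖₂ ≤ ε₁ for all j ∈ [k] and |Û_{ij} − U_{ij}| ≤ ε₂ for all i ∈ [n], j ∈ [k]. Then the centers μ̂_1,…,μ̂_k are pairwise distinct and XB(x, μ̂, Û) ≤ [ J_fm(x, μ, U) + n(4Rε₁ + ε₁²) + 2nkα(1+ε₂)^{α−1} ε₂ (R² + (R+ε₁)²) ] / [ nk ( min_{i≠j} ‖μ_i − μ_j‖₂² − 8Rε₁ − 4ε₁² ) ]. -/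
open scoped BigOperators

private lemma rpow_upper_aux {α u a : ℝ} (hα : 1 ≤ α) (hu : 0 ≤ u) (h0 : 0 < a) :
    a ^ α ≤ u ^ α + α * a ^ (α - 1) * (a - u) := by
  have hs : (-1 : ℝ) ≤ u / a - 1 := by
    have : 0 ≤ u / a := div_nonneg hu h0.le
    linarith
  have hb := one_add_mul_self_le_rpow_one_add hs hα
  have h1 : (1 : ℝ) + (u / a - 1) = u / a := by ring
  rw [h1, Real.div_rpow hu h0.le] at hb
  have hapos : 0 < a ^ α := Real.rpow_pos_of_pos h0 α
  have hkey : a ^ α * (1 + α * (u / a - 1)) ≤ u ^ α := by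
    calc a ^ α * (1 + α * (u / a - 1)) ≤ a ^ α * (u ^ α / a ^ α) :=
          mul_le_mul_of_nonneg_left hb hapos.le
      _ = u ^ α := by field_simp
  have hsub : a ^ (α - 1) = a ^ α / a := Real.rpow_sub_one h0.ne' α
  have heq : a ^ α * (1 + α * (u / a - 1)) =
      a ^ α - α * (a ^ α / a) * (a - u) := by
    field_simp
    ring
  rw [heq] at hkey
  rw [hsub]
  linarith

private lemma rpow_diff_aux {α u v ε : ℝ} (hα : 1 ≤ α) (hu0 : 0 ≤ u) (hu1 : u ≤ 1)
    (hv0 : 0 ≤ v) (hε : 0 ≤ ε) (hvu : v ≤ u + ε) :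
    v ^ α ≤ u ^ α + α * (1 + ε) ^ (α - 1) * ε := by
  have hα0 : (0 : ℝ) ≤ α := by linarith
  have hδ : 0 ≤ α * (1 + ε) ^ (α - 1) * ε := by positivity
  rcases le_or_gt v u with h | h
  · have := Real.rpow_le_rpow hv0 h hα0
    linarith
  · have h0 : 0 < u + ε := lt_of_lt_of_le (lt_of_le_of_lt hu0 h) hvu
    have h1 := rpow_upper_aux hα hu0 h0
    have h2 : v ^ α ≤ (u + ε) ^ α := Real.rpow_le_rpow hv0 hvu hα0
    have h3 : (u + ε) ^ (α - 1) ≤ (1 + ε) ^ (α - 1) :=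
      Real.rpow_le_rpow h0.le (by linarith) (by linarith)
    have h4 : α * (u + ε) ^ (α - 1) * (u + ε - u) ≤ α * (1 + ε) ^ (α - 1) * ε := by
      have he : u + ε - u = ε := by ring
      rw [he]
      exact mul_le_mul_of_nonneg_right
        (mul_le_mul_of_nonneg_left h3 (by linarith : (0:ℝ) ≤ α)) hε
    linarith

set_option maxHeartbeats 1000000 in
/-- Stability of the Xie–Beni index under approximation of the centers and of the
membership weights (Lemma 2 of the paper, in explicit non-asymptotic form). -/
theorem xie_beni_stability {d n k : ℕ} (hk : 2 ≤ k) (hn : 1 ≤ n) {α R ε₁ ε₂ : ℝ}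
    (hα : 1 ≤ α) (hR : 0 < R) (hε₁ : 0 ≤ ε₁) (hε₂ : 0 ≤ ε₂)
    (x : Fin n → EuclideanSpace ℝ (Fin d)) (μ μhat : Fin k → EuclideanSpace ℝ (Fin d))
    (U Uhat : Fin n → Fin k → ℝ)
    (hx : ∀ i, x i ∈ Metric.closedBall (0 : EuclideanSpace ℝ (Fin d)) R)
    (hμ : ∀ j, μ j ∈ Metric.closedBall (0 : EuclideanSpace ℝ (Fin d)) R)
    (hU : ∀ i j, U i j ∈ Set.Icc (0 : ℝ) 1)
    (hUrow : ∀ i, ∑ j, U i j = 1)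
    (hUhat : ∀ i j, Uhat i j ∈ Set.Icc (0 : ℝ) 1)
    (hsep : 8 * R * ε₁ + 4 * ε₁ ^ 2 <
      sInf {r : ℝ | ∃ i j : Fin k, i ≠ j ∧ r = ‖μ i - μ j‖ ^ 2})
    (hμerr : ∀ j, ‖μhat j - μ j‖ ≤ ε₁)
    (hUerr : ∀ i j, |Uhat i j - U i j| ≤ ε₂) :
    (∀ i j : Fin k, i ≠ j → μhat i ≠ μhat j) ∧
    (∑ i, ∑ j, Uhat i j ^ α * ‖x i - μhat j‖ ^ 2) /
        ((n : ℝ) * k * sInf {r : ℝ | ∃ i j : Fin k, i ≠ j ∧ r = ‖μhat i - μhat j‖ ^ 2}) ≤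
      ((∑ i, ∑ j, U i j ^ α * ‖x i - μ j‖ ^ 2) + n * (4 * R * ε₁ + ε₁ ^ 2)
          + 2 * n * k * α * (1 + ε₂) ^ (α - 1) * ε₂ * (R ^ 2 + (R + ε₁) ^ 2)) /
        ((n : ℝ) * k *
          (sInf {r : ℝ | ∃ i j : Fin k, i ≠ j ∧ r = ‖μ i - μ j‖ ^ 2}
            - 8 * R * ε₁ - 4 * ε₁ ^ 2)) := by
  -- basic facts
  have hα0 : (0 : ℝ) ≤ α := by linarith
  set S := sInf {r : ℝ | ∃ i j : Fin k, i ≠ j ∧ r = ‖μ i - μ j‖ ^ 2} with hSdef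
  set Sh := sInf {r : ℝ | ∃ i j : Fin k, i ≠ j ∧ r = ‖μhat i - μhat j‖ ^ 2} with hShdef
  have hfin : ∀ ν : Fin k → EuclideanSpace ℝ (Fin d),
      Set.Finite {r : ℝ | ∃ i j : Fin k, i ≠ j ∧ r = ‖ν i - ν j‖ ^ 2} := by
    intro ν
    apply Set.Finite.subset
      (Set.finite_range fun p : Fin k × Fin k => ‖ν p.1 - ν p.2‖ ^ 2)
    rintro r ⟨i, j, -, rfl⟩
    exact ⟨(i, j), rfl⟩
  have hi0 : (⟨0, by omega⟩ : Fin k) ≠ ⟨1, by omega⟩ := by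
    simp [Fin.ext_iff]
  have hSle : ∀ i j : Fin k, i ≠ j → S ≤ ‖μ i - μ j‖ ^ 2 := fun i j hij =>
    csInf_le (hfin μ).bddBelow ⟨i, j, hij, rfl⟩
  -- norms bounded by R
  have hxn : ∀ i, ‖x i‖ ≤ R := fun i => mem_closedBall_zero_iff.mp (hx i)
  have hμn : ∀ j, ‖μ j‖ ≤ R := fun j => mem_closedBall_zero_iff.mp (hμ j)
  have hμd : ∀ i j : Fin k, ‖μ i - μ j‖ ≤ 2 * R := by
    intro i j
    calc ‖μ i - μ j‖ ≤ ‖μ i‖ + ‖μ j‖ := norm_sub_le _ _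
      _ ≤ 2 * R := by linarith [hμn i, hμn j]
  -- separation of the true centers
  have hgap : ∀ i j : Fin k, i ≠ j → 2 * ε₁ < ‖μ i - μ j‖ := by
    intro i j hij
    by_contra h
    push_neg at h
    have h2 : ‖μ i - μ j‖ ^ 2 ≤ (2 * ε₁) ^ 2 :=
      pow_le_pow_left₀ (norm_nonneg _) h 2
    nlinarith [hSle i j hij, mul_nonneg hR.le hε₁]
  -- lower bound on approximate distances
  have hhatlow : ∀ i j : Fin k, i ≠ j →
      ‖μ i - μ j‖ - 2 * ε₁ ≤ ‖μhat i - μhat j‖ := by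
    intro i j hij
    have h3 : ‖μ i - μ j‖ ≤ ‖μ i - μhat i‖ + ‖μhat i - μhat j‖ + ‖μhat j - μ j‖ := by
      have : μ i - μ j = (μ i - μhat i) + (μhat i - μhat j) + (μhat j - μ j) := by
        abel
      rw [this]
      exact norm_add₃_le
    have h4 : ‖μ i - μhat i‖ ≤ ε₁ := by rw [norm_sub_rev]; exact hμerr i
    linarith [hμerr j]
  -- distinctness
  have hdist : ∀ i j : Fin k, i ≠ j → μhat i ≠ μhat j := by
    intro i j hij heq
    have h1 := hhatlow i j hij
    have h2 := hgap i j hij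
    rw [heq, sub_self, norm_zero] at h1
    linarith
  refine ⟨hdist, ?_⟩
  -- lower bound on Sh
  have hShlow : S - 8 * R * ε₁ - 4 * ε₁ ^ 2 ≤ Sh := by
    have hnonempty : {r : ℝ | ∃ i j : Fin k, i ≠ j ∧ r = ‖μhat i - μhat j‖ ^ 2}.Nonempty :=
      ⟨‖μhat ⟨0, by omega⟩ - μhat ⟨1, by omega⟩‖ ^ 2, ⟨0, by omega⟩, ⟨1, by omega⟩, hi0, rfl⟩
    apply le_csInf hnonempty
    rintro r ⟨i, j, hij, rfl⟩
    have h1 := hhatlow i j hij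
    have h2 := hgap i j hij
    have h3 := hμd i j
    have h4 := hSle i j hij
    have h5 : (‖μ i - μ j‖ - 2 * ε₁) ^ 2 ≤ ‖μhat i - μhat j‖ ^ 2 :=
      pow_le_pow_left₀ (by linarith) h1 2
    nlinarith [mul_nonneg hε₁ (sub_nonneg.2 h3)]
  have hSpos : 0 < S - 8 * R * ε₁ - 4 * ε₁ ^ 2 := by
    linarith [hsep]
  -- numerator bound
  set δ := α * (1 + ε₂) ^ (α - 1) * ε₂ with hδdef
  have hδ0 : 0 ≤ δ := by positivity
  have hxhat : ∀ i j, ‖x i - μhat j‖ ≤ ‖x i - μ j‖ + ε₁ := by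
    intro i j
    calc ‖x i - μhat j‖ = ‖(x i - μ j) - (μhat j - μ j)‖ := by congr 1; abel
      _ ≤ ‖x i - μ j‖ + ‖μhat j - μ j‖ := norm_sub_le _ _
      _ ≤ ‖x i - μ j‖ + ε₁ := by linarith [hμerr j]
  have hxμ : ∀ i j, ‖x i - μ j‖ ≤ 2 * R := by
    intro i j
    calc ‖x i - μ j‖ ≤ ‖x i‖ + ‖μ j‖ := norm_sub_le _ _
      _ ≤ 2 * R := by linarith [hxn i, hμn j]
  have hterm : ∀ i j, Uhat i j ^ α * ‖x i - μhat j‖ ^ 2 ≤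
      U i j ^ α * ‖x i - μ j‖ ^ 2 + U i j ^ α * (4 * R * ε₁ + ε₁ ^ 2)
        + δ * (2 * (R ^ 2 + (R + ε₁) ^ 2)) := by
    intro i j
    obtain ⟨hU0, hU1⟩ := hU i j
    obtain ⟨hUh0, hUh1⟩ := hUhat i j
    have hvu : Uhat i j ≤ U i j + ε₂ := by
      have := abs_le.mp (hUerr i j)
      linarith [this.2]
    have hpow : Uhat i j ^ α ≤ U i j ^ α + δ :=
      rpow_diff_aux hα hU0 hU1 hUh0 hε₂ hvu
    have hUα0 : 0 ≤ U i j ^ α := Real.rpow_nonneg hU0 α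
    have hn1 : ‖x i - μhat j‖ ^ 2 ≤ ‖x i - μ j‖ ^ 2 + (4 * R * ε₁ + ε₁ ^ 2) := by
      have h1 := hxhat i j
      have h2 := hxμ i j
      have h3 : ‖x i - μhat j‖ ^ 2 ≤ (‖x i - μ j‖ + ε₁) ^ 2 :=
        pow_le_pow_left₀ (norm_nonneg _) h1 2
      nlinarith [mul_nonneg hε₁ (sub_nonneg.2 h2)]
    have hn2 : ‖x i - μhat j‖ ^ 2 ≤ 2 * (R ^ 2 + (R + ε₁) ^ 2) := by
      have h1 : ‖x i - μhat j‖ ≤ R + (R + ε₁) := by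
        have h2 : ‖μhat j‖ ≤ ‖μ j‖ + ‖μhat j - μ j‖ := by
          calc ‖μhat j‖ = ‖μ j + (μhat j - μ j)‖ := by congr 1; abel
            _ ≤ ‖μ j‖ + ‖μhat j - μ j‖ := norm_add_le _ _
        calc ‖x i - μhat j‖ ≤ ‖x i‖ + ‖μhat j‖ := norm_sub_le _ _
          _ ≤ R + (R + ε₁) := by linarith [hxn i, hμn j, hμerr j]
      have h3 : ‖x i - μhat j‖ ^ 2 ≤ (R + (R + ε₁)) ^ 2 :=
        pow_le_pow_left₀ (norm_nonneg _) h1 2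
      nlinarith [sq_nonneg (R - (R + ε₁))]
    have hsq0 : (0:ℝ) ≤ ‖x i - μhat j‖ ^ 2 := sq_nonneg _
    calc Uhat i j ^ α * ‖x i - μhat j‖ ^ 2
        ≤ (U i j ^ α + δ) * ‖x i - μhat j‖ ^ 2 :=
          mul_le_mul_of_nonneg_right hpow hsq0
      _ = U i j ^ α * ‖x i - μhat j‖ ^ 2 + δ * ‖x i - μhat j‖ ^ 2 := by ring
      _ ≤ U i j ^ α * (‖x i - μ j‖ ^ 2 + (4 * R * ε₁ + ε₁ ^ 2))
            + δ * (2 * (R ^ 2 + (R + ε₁) ^ 2)) := by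
          gcongr
      _ = U i j ^ α * ‖x i - μ j‖ ^ 2 + U i j ^ α * (4 * R * ε₁ + ε₁ ^ 2)
            + δ * (2 * (R ^ 2 + (R + ε₁) ^ 2)) := by ring
  have hrow : ∀ i, ∑ j, U i j ^ α ≤ 1 := by
    intro i
    rw [← hUrow i]
    apply Finset.sum_le_sum
    intro j _
    obtain ⟨hU0, hU1⟩ := hU i j
    calc U i j ^ α ≤ U i j ^ (1:ℝ) :=
        Real.rpow_le_rpow_of_exponent_ge' hU0 hU1 zero_le_one hα
      _ = U i j := Real.rpow_one _
  have hnum : (∑ i, ∑ j, Uhat i j ^ α * ‖x i - μhat j‖ ^ 2) ≤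
      (∑ i, ∑ j, U i j ^ α * ‖x i - μ j‖ ^ 2) + n * (4 * R * ε₁ + ε₁ ^ 2)
        + 2 * n * k * α * (1 + ε₂) ^ (α - 1) * ε₂ * (R ^ 2 + (R + ε₁) ^ 2) := by
    have step1 : (∑ i, ∑ j, Uhat i j ^ α * ‖x i - μhat j‖ ^ 2) ≤
        ∑ i, ∑ j, (U i j ^ α * ‖x i - μ j‖ ^ 2 + U i j ^ α * (4 * R * ε₁ + ε₁ ^ 2)
          + δ * (2 * (R ^ 2 + (R + ε₁) ^ 2))) :=
      Finset.sum_le_sum fun i _ => Finset.sum_le_sum fun j _ => hterm i j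
    have step2 : ∀ i : Fin n,
        (∑ j, (U i j ^ α * ‖x i - μ j‖ ^ 2 + U i j ^ α * (4 * R * ε₁ + ε₁ ^ 2)
          + δ * (2 * (R ^ 2 + (R + ε₁) ^ 2)))) ≤
        (∑ j, U i j ^ α * ‖x i - μ j‖ ^ 2) + (4 * R * ε₁ + ε₁ ^ 2)
          + k * (δ * (2 * (R ^ 2 + (R + ε₁) ^ 2))) := by
      intro i
      simp only [Finset.sum_add_distrib, Finset.sum_const, Finset.card_univ,
        Fintype.card_fin, nsmul_eq_mul]
      have h1 : (∑ j, U i j ^ α * (4 * R * ε₁ + ε₁ ^ 2)) ≤ 4 * R * ε₁ + ε₁ ^ 2 := by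
        rw [← Finset.sum_mul]
        have h0 : (0:ℝ) ≤ 4 * R * ε₁ + ε₁ ^ 2 := by positivity
        nlinarith [hrow i, Finset.sum_nonneg fun j (_ : j ∈ Finset.univ) =>
          Real.rpow_nonneg (hU i j).1 α]
      have h2 : (0:ℝ) ≤ δ * (2 * (R ^ 2 + (R + ε₁) ^ 2)) := by positivity
      linarith
    have step3 : (∑ i, ∑ j, Uhat i j ^ α * ‖x i - μhat j‖ ^ 2) ≤
        ∑ i : Fin n, ((∑ j, U i j ^ α * ‖x i - μ j‖ ^ 2) + (4 * R * ε₁ + ε₁ ^ 2)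
          + k * (δ * (2 * (R ^ 2 + (R + ε₁) ^ 2)))) :=
      step1.trans (Finset.sum_le_sum fun i _ => step2 i)
    simp only [Finset.sum_add_distrib, Finset.sum_const, Finset.card_univ,
      Fintype.card_fin, nsmul_eq_mul] at step3
    have hrew : (n : ℝ) * ((k : ℝ) * (δ * (2 * (R ^ 2 + (R + ε₁) ^ 2)))) =
        2 * n * k * α * (1 + ε₂) ^ (α - 1) * ε₂ * (R ^ 2 + (R + ε₁) ^ 2) := by
      rw [hδdef]; ring
    linarith [step3]
  -- put things together
  have hn0 : (0:ℝ) < n := by exact_mod_cast hn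
  have hk0 : (0:ℝ) < k := by positivity
  have hdenpos : (0:ℝ) < (n : ℝ) * k * (S - 8 * R * ε₁ - 4 * ε₁ ^ 2) := by
    apply mul_pos (mul_pos hn0 hk0) hSpos
  have hdenle : (n : ℝ) * k * (S - 8 * R * ε₁ - 4 * ε₁ ^ 2) ≤ (n : ℝ) * k * Sh := by
    apply mul_le_mul_of_nonneg_left _ (le_of_lt (mul_pos hn0 hk0))
    linarith
  have hnumR0 : (0:ℝ) ≤ (∑ i, ∑ j, U i j ^ α * ‖x i - μ j‖ ^ 2)
      + n * (4 * R * ε₁ + ε₁ ^ 2)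
      + 2 * n * k * α * (1 + ε₂) ^ (α - 1) * ε₂ * (R ^ 2 + (R + ε₁) ^ 2) := by
    have hJ : (0:ℝ) ≤ ∑ i, ∑ j, U i j ^ α * ‖x i - μ j‖ ^ 2 :=
      Finset.sum_nonneg fun i _ => Finset.sum_nonneg fun j _ =>
        mul_nonneg (Real.rpow_nonneg (hU i j).1 α) (sq_nonneg _)
    have h1 : (0:ℝ) ≤ (n:ℝ) * (4 * R * ε₁ + ε₁ ^ 2) := by positivity
    have h2 : (0:ℝ) ≤ 2 * n * k * α * (1 + ε₂) ^ (α - 1) * ε₂ * (R ^ 2 + (R + ε₁) ^ 2) := by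
      positivity
    linarith
  exact div_le_div₀ hnumR0 hnum hdenpos hdenle
end

section
/- There exists an absolute constant c > 0 with the following property. Let d, n, m, k ≥ 1 be integers, R > 0, δ ∈ (0,1), α ≥ 1, let x_1,…,x_n lie in the closed ball B(0,R) ⊂ ℝ^d, let U ∈ [0,1]^{n×k}, and fix j ∈ [k]. Set Y = (1/n)·Σ_{i=1}^n U_{ij}^α and assume Y > √( (c/(2m))·log(2/δ) ). Let μ_j = (Σ_{i=1}^n U_{ij}^α x_i)/(Σ_{i=1}^n U_{ij}^α), and let I_1,…,I_m be independent random indices, each uniformly distributed on {1,…,n}. Then with probability at least 1 − δ, Σ_{p=1}^m U_{I_p j}^α > 0 and the estimator μ̂_j = (Σ_{p=1}^m U_{I_p j}^α x_{I_p})/(Σ_{p=1}^m U_{I_p j}^α) satisfies ‖μ_j − μ̂_j‖₂² ≤ (4R²/Y²)·√( (c/m)·log(2/δ) ). -/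
/-!
Write `w i = U i j ^ α` and `Y` for the mean weight. As long as the sampled total weight
`∑ₚ w (I p)` exceeds `m Y / 2`, the error `μ - μ̂ = -(∑ₚ w (I p))⁻¹ • ∑ₚ w (I p) • (x (I p) - μ)`
is a normalised sum of `m` independent centred vectors of norm at most `2 R`. Both the total
weight and this sum concentrate by a dimension-free Hoeffding inequality in inner product spaces
(Pinelis): since `t ↦ cosh (λ √t)` is convex and `‖u + f‖² ≤ ‖u‖² + 2 ⟪u, f⟫ + K²`, the average
of `cosh (λ ‖u + f i‖)` over centred `f i` with `‖f i‖ ≤ K` is at most `cosh (λ ‖u‖) cosh (λ K)`.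
Iterating over the `m` draws and applying Chernoff's bound bounds each tail by
`2 exp (-r² / (2 m K²))`, which is at most `δ / 2` for both tails once `c = 32`. Independence
and uniformity make all `n ^ m` index sequences equally likely, so these probabilities are
counts over `Fin m → Fin n`.
-/

open MeasureTheory ProbabilityTheory Real Finset
open scoped ENNReal

theorem ConvexOn.of_hasSum {E κ : Type*} [AddCommMonoid E] [Module ℝ E] {s : Set E}
    {g : κ → E → ℝ} {F : E → ℝ} (hs : Convex ℝ s) (hg : ∀ k, ConvexOn ℝ s (g k))
    (hF : ∀ x ∈ s, HasSum (fun k => g k x) (F x)) : ConvexOn ℝ s F := by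
  refine ⟨hs, fun x hx y hy a b ha hb hab => ?_⟩
  exact hasSum_le (fun k => (hg k).2 hx hy ha hb hab) (hF _ (hs hx hy ha hb hab))
    (((hF x hx).mul_left a).add ((hF y hy).mul_left b))

theorem Real.convexOn_cosh_mul_sqrt (c : ℝ) : ConvexOn ℝ (Set.Ici 0) fun t => cosh (c * √t) := by
  -- `cosh (c * √t) = ∑ₖ (c ^ 2) ^ k / (2 k)! * t ^ k`, a series of convex functions of `t`
  refine ConvexOn.of_hasSum (convex_Ici 0)
    (fun k => (convexOn_pow k).smul (by positivity : 0 ≤ (c ^ 2) ^ k / (2 * k).factorial))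
    fun t ht => ?_
  convert Real.hasSum_cosh (c * √t) using 2 with k
  rw [smul_eq_mul, mul_pow, pow_mul, pow_mul (√t), sq_sqrt ht]
  ring

theorem ConvexOn.sub_mul_le_of_mem_Icc {φ : ℝ → ℝ} {s : Set ℝ} (hφ : ConvexOn ℝ s φ) {p q x : ℝ}
    (hp : p ∈ s) (hq : q ∈ s) (hx : x ∈ Set.Icc p q) :
    (q - p) * φ x ≤ (q - x) * φ p + (x - p) * φ q := by
  rcases hx.1.eq_or_lt' with rfl | hpx
  · exact le_of_eq (by ring)
  have hpq : 0 < q - p := by linarith [hx.2]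
  have key := hφ.2 hp hq (div_nonneg (by linarith [hx.2]) hpq.le) (div_nonneg (by linarith) hpq.le)
    (by field_simp; ring : (q - x) / (q - p) + (x - p) / (q - p) = 1)
  have hcomb : ((q - x) / (q - p)) • p + ((x - p) / (q - p)) • q = x := by
    simp only [smul_eq_mul]; field_simp; ring
  rw [hcomb, smul_eq_mul, smul_eq_mul] at key
  calc (q - p) * φ x ≤ (q - p) * ((q - x) / (q - p) * φ p + (x - p) / (q - p) * φ q) :=
        mul_le_mul_of_nonneg_left key hpq.le
    _ = _ := by field_simp

theorem ConvexOn.sum_le_card_mul_midpoint {ι : Type*} {φ : ℝ → ℝ} {s : Set ℝ}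
    (hφ : ConvexOn ℝ s φ) {p q : ℝ} (hp : p ∈ s) (hq : q ∈ s) {t : Finset ι} {x : ι → ℝ}
    (hx : ∀ i ∈ t, x i ∈ Set.Icc p q) (hmean : ∑ i ∈ t, x i = #t * ((p + q) / 2)) :
    ∑ i ∈ t, φ (x i) ≤ #t * ((φ p + φ q) / 2) := by
  rcases t.eq_empty_or_nonempty with rfl | ⟨i₀, hi₀⟩
  · simp
  rcases (hx i₀ hi₀).1.trans (hx i₀ hi₀).2 |>.eq_or_lt with rfl | hpq
  · have hxp : ∀ i ∈ t, x i = p := fun i hi => le_antisymm (hx i hi).2 (hx i hi).1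
    rw [sum_congr rfl fun i hi => by rw [hxp i hi], sum_const, nsmul_eq_mul]
    exact le_of_eq (by ring)
  have hsum : (q - p) * ∑ i ∈ t, φ (x i) ≤ (q - p) * (#t * ((φ p + φ q) / 2)) :=
    calc (q - p) * ∑ i ∈ t, φ (x i)
        ≤ ∑ i ∈ t, ((q - x i) * φ p + (x i - p) * φ q) := by
          rw [mul_sum]; exact sum_le_sum fun i hi => hφ.sub_mul_le_of_mem_Icc hp hq (hx i hi)
      _ = (q - p) * (#t * ((φ p + φ q) / 2)) := by
          simp only [sum_add_distrib, ← sum_mul, sum_sub_distrib, hmean, sum_const, nsmul_eq_mul]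
          ring
  exact le_of_mul_le_mul_left hsum (sub_pos.2 hpq)

theorem Finset.centerMass_sub {ι E : Type*} [AddCommGroup E] [Module ℝ E] {t : Finset ι}
    {w : ι → ℝ} (z : ι → E) (c : E) (hw : ∑ i ∈ t, w i ≠ 0) :
    t.centerMass w z - c = (∑ i ∈ t, w i)⁻¹ • ∑ i ∈ t, w i • (z i - c) := by
  simp_rw [smul_sub]
  rw [sum_sub_distrib, ← sum_smul, smul_sub, smul_smul, inv_mul_cancel₀ hw, one_smul]
  rfl

theorem Finset.sum_smul_sub_centerMass {ι E : Type*} [AddCommGroup E] [Module ℝ E]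
    {t : Finset ι} {w : ι → ℝ} (z : ι → E) (hw : ∑ i ∈ t, w i ≠ 0) :
    ∑ i ∈ t, w i • (z i - t.centerMass w z) = 0 := by
  simpa [hw] using (t.centerMass_sub z (t.centerMass w z) hw).symm

theorem norm_sub_centerMass_le {ι E : Type*} [NormedAddCommGroup E] [NormedSpace ℝ E]
    {t : Finset ι} {w : ι → ℝ} {z : ι → E} (c : E) {r s : ℝ} (hs : 0 < s)
    (hw : s ≤ ∑ i ∈ t, w i) (hr : ‖∑ i ∈ t, w i • (z i - c)‖ ≤ r) :
    ‖c - t.centerMass w z‖ ≤ r / s := by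
  have hW : 0 < ∑ i ∈ t, w i := hs.trans_le hw
  rw [norm_sub_rev, t.centerMass_sub z c hW.ne', norm_smul, norm_inv, norm_of_nonneg hW.le,
    inv_mul_eq_div]
  exact div_le_div₀ ((norm_nonneg _).trans hr) hr hs hw

theorem norm_sub_centerMass_le_of_sum_sub_lt {κ E : Type*} [Fintype κ] [NormedAddCommGroup E]
    [NormedSpace ℝ E] {v : κ → ℝ} {z : κ → E} (c : E) {Y r : ℝ}
    (h₁ : |∑ p, (v p - Y)| < Fintype.card κ * Y / 2) (h₂ : ‖∑ p, v p • (z p - c)‖ ≤ r) :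
    0 < ∑ p, v p ∧ ‖c - univ.centerMass v z‖ ≤ 2 * r / (Fintype.card κ * Y) := by
  have hs : 0 < Fintype.card κ * Y / 2 := (abs_nonneg _).trans_lt h₁
  have hv : Fintype.card κ * Y / 2 ≤ ∑ p, v p := by
    rw [sum_sub_distrib, sum_const, card_univ, nsmul_eq_mul] at h₁
    linarith [neg_abs_le (∑ p, v p - Fintype.card κ * Y)]
  refine ⟨hs.trans_le hv, (norm_sub_centerMass_le c hs hv h₂).trans_eq ?_⟩
  field_simp

theorem two_mul_exp_neg_le_half {δ t : ℝ} (hδ0 : 0 < δ) (hδ1 : δ ≤ 1)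
    (ht : 2 * log (2 / δ) ≤ t) : 2 * exp (-t) ≤ δ / 2 := by
  have hexp : exp (-(2 * log (2 / δ))) = δ / 2 * (δ / 2) := by
    rw [← mul_neg, ← log_inv, inv_div, two_mul, exp_add, exp_log (by positivity)]
  have := exp_le_exp.2 (neg_le_neg ht)
  nlinarith

section Pinelis

variable {ι E : Type*} [Fintype ι] [NormedAddCommGroup E] [InnerProductSpace ℝ E]

theorem sum_cosh_mul_norm_add_le {f : ι → E} {K : ℝ} (hf : ∀ i, ‖f i‖ ≤ K)
    (hsum : ∑ i, f i = 0) (c : ℝ) (u : E) :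
    ∑ i, cosh (c * ‖u + f i‖) ≤ Fintype.card ι * (cosh (c * ‖u‖) * cosh (c * K)) := by
  set t : ι → ℝ := fun i => ‖u‖ ^ 2 + 2 * inner ℝ u (f i) + K ^ 2
  have hinner : ∀ i, |inner ℝ u (f i)| ≤ ‖u‖ * K := fun i =>
    (abs_real_inner_le_norm u (f i)).trans (mul_le_mul_of_nonneg_left (hf i) (norm_nonneg u))
  have hnorm : ∀ i, ‖u + f i‖ ≤ √(t i) := fun i => by
    refine Real.le_sqrt_of_sq_le ?_
    rw [norm_add_sq_real]
    have := pow_le_pow_left₀ (norm_nonneg (f i)) (hf i) 2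
    simp only [t]; linarith
  have ht : ∀ i ∈ (univ : Finset ι), t i ∈ Set.Icc ((‖u‖ - K) ^ 2) ((‖u‖ + K) ^ 2) := fun i _ => by
    have := abs_le.1 (hinner i)
    constructor <;> simp only [t] <;> nlinarith
  have hmean : ∑ i, t i = #(univ : Finset ι) * (((‖u‖ - K) ^ 2 + (‖u‖ + K) ^ 2) / 2) := by
    simp only [t, sum_add_distrib, ← mul_sum, ← inner_sum, hsum, inner_zero_right, sum_const,
      nsmul_eq_mul]
    ring
  calc ∑ i, cosh (c * ‖u + f i‖) ≤ ∑ i, cosh (c * √(t i)) :=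
        sum_le_sum fun i _ => by
          rw [cosh_le_cosh, abs_mul, abs_mul, abs_norm, abs_of_nonneg (sqrt_nonneg _)]
          exact mul_le_mul_of_nonneg_left (hnorm i) (abs_nonneg c)
    _ ≤ Fintype.card ι * ((cosh (c * √((‖u‖ - K) ^ 2)) + cosh (c * √((‖u‖ + K) ^ 2))) / 2) :=
        (convexOn_cosh_mul_sqrt c).sum_le_card_mul_midpoint (Set.mem_Ici.2 (sq_nonneg _))
          (Set.mem_Ici.2 (sq_nonneg _)) ht hmean
    _ = Fintype.card ι * (cosh (c * ‖u‖) * cosh (c * K)) := by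
        have hcosh : ∀ a, cosh (c * |a|) = cosh (c * a) := fun a => by
          rw [← cosh_abs, abs_mul, abs_abs, ← abs_mul, cosh_abs]
        rw [sqrt_sq_eq_abs, sqrt_sq_eq_abs, hcosh, hcosh, mul_sub, mul_add, cosh_sub, cosh_add]
        ring

theorem sum_cosh_mul_norm_sum_comp_le {f : ι → E} {K : ℝ} (hf : ∀ i, ‖f i‖ ≤ K)
    (hsum : ∑ i, f i = 0) (c : ℝ) (m : ℕ) :
    ∑ σ : Fin m → ι, cosh (c * ‖∑ p, f (σ p)‖) ≤ (Fintype.card ι * cosh (c * K)) ^ m := by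
  induction m with
  | zero => simp
  | succ m ih =>
    rw [← (Fin.consEquiv fun _ => ι).sum_comp, Fintype.sum_prod_type, sum_comm]
    calc ∑ σ : Fin m → ι, ∑ i, cosh (c * ‖∑ p, f (Fin.cons i σ p)‖)
        = ∑ σ : Fin m → ι, ∑ i, cosh (c * ‖∑ p, f (σ p) + f i‖) := by
          simp only [Fin.sum_univ_succ, Fin.cons_zero, Fin.cons_succ, add_comm (f _)]
      _ ≤ ∑ σ : Fin m → ι, Fintype.card ι * (cosh (c * ‖∑ p, f (σ p)‖) * cosh (c * K)) :=
          sum_le_sum fun σ _ => sum_cosh_mul_norm_add_le hf hsum c _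
      _ = (∑ σ : Fin m → ι, cosh (c * ‖∑ p, f (σ p)‖)) * (Fintype.card ι * cosh (c * K)) := by
          rw [sum_mul]; exact sum_congr rfl fun σ _ => by ring
      _ ≤ (Fintype.card ι * cosh (c * K)) ^ (m + 1) := by
          rw [pow_succ]; exact mul_le_mul_of_nonneg_right ih (by positivity)

theorem card_filter_le_norm_sum_comp_le {f : ι → E} {K : ℝ} (hf : ∀ i, ‖f i‖ ≤ K)
    (hsum : ∑ i, f i = 0) (m : ℕ) {r : ℝ} (hr : 0 ≤ r) :
    (#{σ : Fin m → ι | r ≤ ‖∑ p, f (σ p)‖} : ℝ) ≤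
      2 * exp (-(r ^ 2 / (2 * m * K ^ 2))) * Fintype.card ι ^ m := by
  set B := ({σ : Fin m → ι | r ≤ ‖∑ p, f (σ p)‖} : Finset _)
  set c := r / (m * K ^ 2)
  have hc : 0 ≤ c := by positivity
  have hmarkov : #B * (exp (c * r) / 2) ≤ ∑ σ : Fin m → ι, cosh (c * ‖∑ p, f (σ p)‖) :=
    calc #B * (exp (c * r) / 2) = ∑ σ ∈ B, exp (c * r) / 2 := by rw [sum_const, nsmul_eq_mul]
      _ ≤ ∑ σ ∈ B, cosh (c * ‖∑ p, f (σ p)‖) := sum_le_sum fun σ hσ => by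
          have hrσ := mul_le_mul_of_nonneg_left (mem_filter.1 hσ).2 hc
          rw [cosh_eq]
          linarith [exp_le_exp.2 hrσ, exp_pos (-(c * ‖∑ p, f (σ p)‖))]
      _ ≤ ∑ σ : Fin m → ι, cosh (c * ‖∑ p, f (σ p)‖) :=
          sum_le_sum_of_subset_of_nonneg (subset_univ B) fun σ _ _ => (cosh_pos _).le
  have hmgf : (Fintype.card ι * cosh (c * K)) ^ m ≤
      Fintype.card ι ^ m * exp (m * ((c * K) ^ 2 / 2)) := by
    rw [mul_pow, exp_nat_mul]
    gcongr
    exact cosh_le_exp_half_sq _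
  have hexponent : m * ((c * K) ^ 2 / 2) - c * r = -(r ^ 2 / (2 * m * K ^ 2)) := by
    rcases eq_or_ne ((m : ℝ) * K ^ 2) 0 with h | h
    · simp [c, h, mul_assoc]
    · simp only [c]; field_simp; ring
  calc (#B : ℝ) = #B * (exp (c * r) / 2) * (2 * exp (-(c * r))) := by
        rw [exp_neg]; field_simp
    _ ≤ Fintype.card ι ^ m * exp (m * ((c * K) ^ 2 / 2)) * (2 * exp (-(c * r))) :=
        mul_le_mul_of_nonneg_right
          (hmarkov.trans ((sum_cosh_mul_norm_sum_comp_le hf hsum c m).trans hmgf)) (by positivity)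
    _ = 2 * exp (-(r ^ 2 / (2 * m * K ^ 2))) * Fintype.card ι ^ m := by
        rw [← hexponent, sub_eq_add_neg, exp_add]; ring

theorem card_filter_le_norm_sum_comp_le_half {f : ι → E} {K : ℝ} (hf : ∀ i, ‖f i‖ ≤ K)
    (hsum : ∑ i, f i = 0) {m : ℕ} {r δ : ℝ} (hr : 0 ≤ r) (hδ0 : 0 < δ) (hδ1 : δ ≤ 1)
    (hK : 0 < K) (hm : 0 < m) (hrδ : 4 * m * K ^ 2 * log (2 / δ) ≤ r ^ 2) :
    (#{σ : Fin m → ι | r ≤ ‖∑ p, f (σ p)‖} : ℝ) ≤ δ / 2 * Fintype.card ι ^ m := by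
  refine (card_filter_le_norm_sum_comp_le hf hsum m hr).trans
    (mul_le_mul_of_nonneg_right ?_ (by positivity))
  refine two_mul_exp_neg_le_half hδ0 hδ1 ((le_div_iff₀ (by positivity)).2 ?_)
  linarith

theorem card_filter_le_norm_sum_smul_sub_centerMass_le_half {w : ι → ℝ} {x : ι → E}
    {R r δ : ℝ} {m : ℕ} (hw : ∀ i, w i ∈ Set.Icc 0 1) (hW : 0 < ∑ i, w i) (hR : 0 < R)
    (hx : ∀ i, ‖x i‖ ≤ R) (hδ0 : 0 < δ) (hδ1 : δ ≤ 1) (hm : 0 < m) (hr : 0 ≤ r)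
    (hrδ : 16 * m * R ^ 2 * log (2 / δ) ≤ r ^ 2) :
    (#{σ : Fin m → ι | r ≤ ‖∑ p, w (σ p) • (x (σ p) - univ.centerMass w x)‖} : ℝ) ≤
      δ / 2 * Fintype.card ι ^ m := by
  have hμ : ‖univ.centerMass w x‖ ≤ R := mem_closedBall_zero_iff.1 <|
    (convex_closedBall 0 R).centerMass_mem (fun i _ => (hw i).1) hW
      fun i _ => mem_closedBall_zero_iff.2 (hx i)
  have hf : ∀ i, ‖w i • (x i - univ.centerMass w x)‖ ≤ 2 * R := fun i => by
    rw [norm_smul, norm_of_nonneg (hw i).1]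
    exact (mul_le_of_le_one_left (norm_nonneg _) (hw i).2).trans
      ((norm_sub_le _ _).trans (by linarith [hx i]))
  exact card_filter_le_norm_sum_comp_le_half hf (univ.sum_smul_sub_centerMass x hW.ne') hr hδ0
    hδ1 (by positivity) hm (by convert hrδ using 1; ring)

theorem mem_Icc_of_sum_eq_card_mul [Nonempty ι] {w : ι → ℝ} {Y : ℝ}
    (hw : ∀ i, w i ∈ Set.Icc 0 1) (hY : ∑ i, w i = Fintype.card ι * Y) : Y ∈ Set.Icc 0 1 := by
  have hcard : (0 : ℝ) < Fintype.card ι := Nat.cast_pos.2 Fintype.card_pos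
  refine ⟨nonneg_of_mul_nonneg_right (hY ▸ sum_nonneg fun i _ => (hw i).1) hcard,
    le_of_mul_le_mul_left ?_ hcard⟩
  simpa [hY] using sum_le_sum fun i (_ : i ∈ univ) => (hw i).2

theorem card_filter_le_abs_sum_sub_le_half {w : ι → ℝ} {Y r δ : ℝ} {m : ℕ}
    (hw : ∀ i, w i ∈ Set.Icc 0 1) (hY : Y ∈ Set.Icc 0 1) (hYdef : ∑ i, w i = Fintype.card ι * Y)
    (hδ0 : 0 < δ) (hδ1 : δ ≤ 1) (hm : 0 < m) (hr : 0 ≤ r) (hrδ : 4 * m * log (2 / δ) ≤ r ^ 2) :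
    (#{σ : Fin m → ι | r ≤ |∑ p, (w (σ p) - Y)|} : ℝ) ≤ δ / 2 * Fintype.card ι ^ m := by
  have hf : ∀ i, ‖w i - Y‖ ≤ 1 := fun i => by
    rw [norm_eq_abs, abs_le]; constructor <;> linarith [(hw i).1, (hw i).2, hY.1, hY.2]
  simpa only [norm_eq_abs] using card_filter_le_norm_sum_comp_le_half hf
    (by simp [sum_sub_distrib, hYdef]) hr hδ0 hδ1 one_pos hm (by linarith)

theorem card_filter_not_centerMass_comp_close_le [Nonempty ι] {w : ι → ℝ} {x : ι → E}
    {R δ Y : ℝ} {m : ℕ} (hw : ∀ i, w i ∈ Set.Icc 0 1) (hR : 0 < R) (hx : ∀ i, ‖x i‖ ≤ R)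
    (hδ0 : 0 < δ) (hδ1 : δ ≤ 1) (hYdef : ∑ i, w i = Fintype.card ι * Y)
    (hmY : 16 * log (2 / δ) < m * Y ^ 2) :
    (#{σ : Fin m → ι | ¬ (0 < ∑ p, w (σ p) ∧
        ‖univ.centerMass w x - univ.centerMass (fun p => w (σ p)) (fun p => x (σ p))‖ ^ 2 ≤
          4 * R ^ 2 / Y ^ 2 * √(32 / m * log (2 / δ)))} : ℝ) ≤ δ * Fintype.card ι ^ m := by
  classical
  set L := log (2 / δ)
  set μ := univ.centerMass w x
  have hL : 0 < L := log_pos (by rw [lt_div_iff₀ hδ0]; linarith)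
  have hY : Y ∈ Set.Icc 0 1 := mem_Icc_of_sum_eq_card_mul hw hYdef
  have hY0 : 0 < Y := lt_of_le_of_ne hY.1 fun h => by simp [← h] at hmY; linarith
  have hm : (0 : ℝ) < m := by nlinarith
  have hmL : 16 * L < m := by nlinarith [pow_le_one₀ (n := 2) hY.1 hY.2]
  -- chosen so that `(2 r / (m Y)) ^ 2` is exactly the claimed bound
  set r := m * R * √(√(32 / m * L))
  have hr : r ^ 2 = m ^ 2 * R ^ 2 * √(32 / m * L) := by
    rw [mul_pow, sq_sqrt (sqrt_nonneg _)]; ring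
  set B₁ : Finset (Fin m → ι) := {σ | m * Y / 2 ≤ |∑ p, (w (σ p) - Y)|}
  set B₂ : Finset (Fin m → ι) := {σ | r ≤ ‖∑ p, w (σ p) • (x (σ p) - μ)‖}
  have hB₁ : (#B₁ : ℝ) ≤ δ / 2 * Fintype.card ι ^ m :=
    card_filter_le_abs_sum_sub_le_half hw hY hYdef hδ0 hδ1 (Nat.cast_pos.1 hm) (by positivity)
      (by nlinarith)
  have hB₂ : (#B₂ : ℝ) ≤ δ / 2 * Fintype.card ι ^ m := by
    refine card_filter_le_norm_sum_smul_sub_centerMass_le_half hw (by rw [hYdef]; positivity) hR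
      hx hδ0 hδ1 (Nat.cast_pos.1 hm) (by positivity) ?_
    have : 16 * L ≤ m * √(32 / m * L) := by
      refine le_of_pow_le_pow_left₀ two_ne_zero (by positivity) ?_
      rw [mul_pow, mul_pow, sq_sqrt (by positivity)]
      field_simp
      nlinarith
    rw [hr]
    nlinarith
  have hgood : ∀ σ : Fin m → ι, σ ∉ B₁ → σ ∉ B₂ → 0 < ∑ p, w (σ p) ∧
      ‖μ - univ.centerMass (fun p => w (σ p)) (fun p => x (σ p))‖ ^ 2 ≤
        4 * R ^ 2 / Y ^ 2 * √(32 / m * L) := fun σ h₁ h₂ => by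
    simp only [B₁, B₂, mem_filter, mem_univ, true_and, not_le] at h₁ h₂
    obtain ⟨hpos, hclose⟩ := norm_sub_centerMass_le_of_sum_sub_lt μ (by simpa using h₁) h₂.le
    refine ⟨hpos, (pow_le_pow_left₀ (norm_nonneg _) hclose 2).trans_eq ?_⟩
    rw [Fintype.card_fin, div_pow, mul_pow, hr]
    field_simp
    norm_num
  calc _ ≤ (#(B₁ ∪ B₂) : ℝ) := by
        gcongr
        intro σ hσ
        by_contra! h
        obtain ⟨h₁, h₂⟩ := notMem_union.1 h
        exact (mem_filter.1 hσ).2 (hgood σ h₁ h₂)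
    _ ≤ #B₁ + #B₂ := by exact_mod_cast card_union_le _ _
    _ ≤ δ * Fintype.card ι ^ m := by linarith

end Pinelis

section Sampling

variable {Ω ι : Type*} [MeasurableSpace Ω] [Fintype ι] {m : ℕ} {P : Measure Ω}
  {I : Fin m → Ω → ι}

theorem measure_sample_eq (hind : iIndepFun (m := fun _ => (⊤ : MeasurableSpace ι)) I P)
    (hunif : ∀ p i, P {ω | I p ω = i} = (Fintype.card ι : ℝ≥0∞)⁻¹) (σ : Fin m → ι) :
    P {ω | (fun p => I p ω) = σ} = (Fintype.card ι : ℝ≥0∞)⁻¹ ^ m := by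
  have hset : {ω | (fun p => I p ω) = σ} = ⋂ p, I p ⁻¹' {σ p} := by
    ext ω; simp [funext_iff]
  rw [hset, hind.meas_iInter fun p => ⟨{σ p}, trivial, rfl⟩]
  simp [Set.preimage, hunif]

theorem measure_sample_mem_le (hind : iIndepFun (m := fun _ => (⊤ : MeasurableSpace ι)) I P)
    (hunif : ∀ p i, P {ω | I p ω = i} = (Fintype.card ι : ℝ≥0∞)⁻¹) (B : Finset (Fin m → ι)) :
    P {ω | (fun p => I p ω) ∈ B} ≤ #B * (Fintype.card ι : ℝ≥0∞)⁻¹ ^ m :=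
  calc P {ω | (fun p => I p ω) ∈ B} = P (⋃ σ ∈ B, {ω | (fun p => I p ω) = σ}) := by
        congr 1; ext ω; simp
    _ ≤ ∑ σ ∈ B, P {ω | (fun p => I p ω) = σ} := measure_biUnion_finset_le _ _
    _ = #B * (Fintype.card ι : ℝ≥0∞)⁻¹ ^ m := by
        simp [measure_sample_eq hind hunif]

theorem ofReal_one_sub_le_measure_sample [IsProbabilityMeasure P] [Nonempty ι]
    (hind : iIndepFun (m := fun _ => (⊤ : MeasurableSpace ι)) I P)
    (hunif : ∀ p i, P {ω | I p ω = i} = (Fintype.card ι : ℝ≥0∞)⁻¹)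
    (G : (Fin m → ι) → Prop) [DecidablePred G] {δ : ℝ} (hδ : 0 ≤ δ)
    (hcard : (#{σ | ¬ G σ} : ℝ) ≤ δ * Fintype.card ι ^ m) :
    ENNReal.ofReal (1 - δ) ≤ P {ω | G (fun p => I p ω)} := by
  set B : Finset (Fin m → ι) := {σ | ¬ G σ}
  have hB : (#B : ℝ≥0∞) * (Fintype.card ι : ℝ≥0∞)⁻¹ ^ m =
      ENNReal.ofReal (#B / Fintype.card ι ^ m) := by
    rw [ENNReal.ofReal_div_of_pos (by positivity), ENNReal.ofReal_natCast,
      ENNReal.ofReal_pow (by positivity), ENNReal.ofReal_natCast, div_eq_mul_inv, ENNReal.inv_pow]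
  have hbad : P {ω | G (fun p => I p ω)}ᶜ ≤ ENNReal.ofReal δ :=
    calc P {ω | G (fun p => I p ω)}ᶜ = P {ω | (fun p => I p ω) ∈ B} := by
          congr 1; ext ω; simp [B]
      _ ≤ ENNReal.ofReal (#B / Fintype.card ι ^ m) := hB ▸ measure_sample_mem_le hind hunif B
      _ ≤ ENNReal.ofReal δ := ENNReal.ofReal_le_ofReal ((div_le_iff₀ (by positivity)).2 hcard)
  -- `I` need not be measurable, so only subadditivity of `P` is available
  rw [ENNReal.ofReal_sub _ hδ, ENNReal.ofReal_one, tsub_le_iff_right]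
  calc 1 = P (_ ∪ _ᶜ) := by rw [Set.union_compl_self, measure_univ]
    _ ≤ P {ω | G (fun p => I p ω)} + P {ω | G (fun p => I p ω)}ᶜ := measure_union_le _ _
    _ ≤ P {ω | G (fun p => I p ω)} + ENNReal.ofReal δ := by gcongr

end Sampling

/-- Lemma (estimate of a cluster mean via uniform sampling): there is an absolute
constant `c > 0` such that, sampling `m` indices uniformly with replacement, with
probability at least `1 - δ` the self-normalized estimator of the cluster center `μ_j`
has squared error at most `(4R²/Y²)·√((c/m)·log(2/δ))`. -/
theorem mean_estimate_uniform_sampling :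
    ∃ c : ℝ, 0 < c ∧
      ∀ (d n m k : ℕ), 1 ≤ d → 1 ≤ n → 1 ≤ m → 1 ≤ k →
      ∀ (R δ α : ℝ), 0 < R → δ ∈ Set.Ioo (0 : ℝ) 1 → 1 ≤ α →
      ∀ (x : Fin n → EuclideanSpace ℝ (Fin d)),
        (∀ i, x i ∈ Metric.closedBall (0 : EuclideanSpace ℝ (Fin d)) R) →
      ∀ (U : Fin n → Fin k → ℝ), (∀ i j, U i j ∈ Set.Icc (0 : ℝ) 1) →
      ∀ j : Fin k,
        Real.sqrt (c / (2 * m) * Real.log (2 / δ)) < (1 / n) * ∑ i, U i j ^ α →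
      ∀ (Ω : Type) (_ : MeasurableSpace Ω) (P : Measure Ω),
        IsProbabilityMeasure P →
      ∀ I : Fin m → Ω → Fin n,
        iIndepFun (m := fun _ => (⊤ : MeasurableSpace (Fin n))) I P →
        (∀ (p : Fin m) (i : Fin n), P {ω | I p ω = i} = 1 / (n : ENNReal)) →
      ENNReal.ofReal (1 - δ) ≤
        P {ω | 0 < ∑ p, U (I p ω) j ^ α ∧
          ‖((∑ i, U i j ^ α)⁻¹ • ∑ i, (U i j ^ α) • x i) -
            ((∑ p, U (I p ω) j ^ α)⁻¹ • ∑ p, (U (I p ω) j ^ α) • x (I p ω))‖ ^ 2 ≤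
            4 * R ^ 2 / ((1 / n * ∑ i, U i j ^ α) ^ 2) *
              Real.sqrt (c / m * Real.log (2 / δ))} := by
  refine ⟨32, by norm_num, ?_⟩
  intro d n m k _ hn hm _ R δ α hR hδ hα x hx U hU j hY Ω _ P _ I hind hunif
  have : Nonempty (Fin n) := ⟨⟨0, hn⟩⟩
  set Y := 1 / n * ∑ i, U i j ^ α
  have hw : ∀ i, U i j ^ α ∈ Set.Icc (0 : ℝ) 1 := fun i =>
    ⟨rpow_nonneg (hU i j).1 α, rpow_le_one (hU i j).1 (hU i j).2 (by linarith)⟩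
  have hmY : 16 * log (2 / δ) < m * Y ^ 2 := by
    have hY0 : 0 < Y := (sqrt_nonneg _).trans_lt hY
    have hm0 : (0 : ℝ) < m := by exact_mod_cast hm
    rw [sqrt_lt' hY0, div_mul_eq_mul_div, div_lt_iff₀ (by positivity)] at hY
    linarith
  have hcard := card_filter_not_centerMass_comp_close_le hw hR
    (fun i => mem_closedBall_zero_iff.1 (hx i)) hδ.1 hδ.2.le (by simp [Y]; field_simp) hmY
  exact ofReal_one_sub_le_measure_sample hind (by simpa using hunif) _ hδ.1.le hcard
end

section
/- There exists an absolute constant c > 0 with the following property. Let d, n ≥ 1 and k ≥ 1 be integers, R > 0, α ≥ 1, β ∈ (0,1], δ ∈ (0,1/2), and ε ∈ (0,R]. Let x_1,…,x_n lie in the closed ball B(0,R) ⊂ ℝ^d, and let U ∈ [0,1]^{n×k} be a feasible membership matrix with Σ_{i=1}^n U_{ij} ≥ βn/k for every j ∈ [k]. Let μ_j = (Σ_{i=1}^n U_{ij}^α x_i)/(Σ_{i=1}^n U_{ij}^α) for each j ∈ [k]. If m ≥ c·(Rk^α/(εβ^α))⁴·log(k/δ) and I_1,…,I_m are independent random indices,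 each uniformly distributed on {1,…,n}, then with probability at least 1 − δ the following holds simultaneously for every j ∈ [k]: Σ_{p=1}^m U_{I_p j}^α > 0 and the estimator μ̂_j = (Σ_{p=1}^m U_{I_p j}^α x_{I_p})/(Σ_{p=1}^m U_{I_p j}^α) satisfies ‖μ̂_j − μ_j‖₂ ≤ ε. -/
open MeasureTheory ProbabilityTheory Finset
open scoped ENNReal

/-!
Sampling `m` indices independently and uniformly from `Fin n` is the uniform distribution on
`Fin m → Fin n`, so the probability of a bad event is at most the number of bad index tuples
divided by `n ^ m`.

Fix a cluster `j` with weights `w i = U i j ^ α`; by Jensen its total weight is at least `n θ`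
with `θ = (β / k) ^ α`. The sample center of mass is `ε`-close to the true one as soon as the
centred sums `∑ p, (w (i p) - mean w)` and `∑ p, (w (i p) • x (i p) - mean (w • x))` are
`O(ε θ m)`. The norm of a sum of `m` independent centred vectors of norm at most `C` has mean at
most `C √m` (second moment) and moves by at most `2 C` when one index changes, so McDiarmid's
inequality (by induction on `m`, with Hoeffding's lemma for each coordinate) makes both sums small
outside a fraction `e^{-L}` of the tuples once `m ≥ 1600 L / (ε θ / R) ^ 2`. Taking
`L = log (2 k / δ)`, a union bound over the clusters leaves probability at most `δ`.
-/

def HasBoundedDifferences {α : Type*} {m : ℕ} (G : (Fin m → α) → ℝ) (D : ℝ) : Prop :=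
  ∀ (p : Fin m) (i j : Fin m → α), (∀ q, q ≠ p → i q = j q) → |G i - G j| ≤ D

section Counting

variable {α : Type*} [Fintype α]

lemma sum_pi_fin_succ {M : Type*} [AddCommMonoid M] {m : ℕ} (f : (Fin (m + 1) → α) → M) :
    ∑ i, f i = ∑ a, ∑ i : Fin m → α, f (Fin.cons a i) := by
  rw [← (Fin.consEquiv fun _ => α).sum_comp, Fintype.sum_prod_type]
  rfl

variable [Nonempty α]

lemma abs_sum_div_card_sub_sum_div_card_le {f g : α → ℝ} {D : ℝ} (h : ∀ a, |f a - g a| ≤ D) :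
    |(∑ a, f a) / Fintype.card α - (∑ a, g a) / Fintype.card α| ≤ D := by
  have hN : (0 : ℝ) < Fintype.card α := by exact_mod_cast Fintype.card_pos
  rw [← sub_div, ← sum_sub_distrib, abs_div, abs_of_pos hN, div_le_iff₀ hN]
  calc |∑ a, (f a - g a)| ≤ ∑ a, |f a - g a| := abs_sum_le_sum_abs _ _
    _ ≤ ∑ _a : α, D := sum_le_sum fun a _ => h a
    _ = D * Fintype.card α := by rw [sum_const, nsmul_eq_mul, mul_comm, card_univ]

/-- Hoeffding's lemma for the uniform distribution on `α`. -/
lemma sum_exp_mul_le_of_sum_eq_zero {u : α → ℝ} {D t : ℝ} (hsum : ∑ a, u a = 0)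
    (hu : ∀ a, |u a| ≤ D) (ht : |t| * D ≤ 1) :
    ∑ a, Real.exp (t * u a) ≤ Fintype.card α * Real.exp (t ^ 2 * D ^ 2) := by
  have hpoint : ∀ a, Real.exp (t * u a) ≤ 1 + t * u a + t ^ 2 * D ^ 2 := by
    intro a
    have hsmall : |t * u a| ≤ 1 := by
      rw [abs_mul]
      exact (mul_le_mul_of_nonneg_left (hu a) (abs_nonneg t)).trans ht
    have hsq : (t * u a) ^ 2 ≤ t ^ 2 * D ^ 2 := by
      rw [mul_pow, ← sq_abs (u a)]
      gcongr
      exact hu a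
    linarith [(abs_le.1 (Real.abs_exp_sub_one_sub_id_le hsmall)).2]
  calc ∑ a, Real.exp (t * u a) ≤ ∑ a, (1 + t * u a + t ^ 2 * D ^ 2) :=
        sum_le_sum fun a _ => hpoint a
    _ = Fintype.card α * (1 + t ^ 2 * D ^ 2) := by
      simp only [sum_add_distrib, ← mul_sum, hsum, sum_const, card_univ, nsmul_eq_mul]
      ring
    _ ≤ Fintype.card α * Real.exp (t ^ 2 * D ^ 2) := by
      gcongr
      linarith [Real.add_one_le_exp (t ^ 2 * D ^ 2)]

namespace HasBoundedDifferences

variable {m : ℕ} {G : (Fin (m + 1) → α) → ℝ} {D : ℝ}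

lemma headAverage (hG : HasBoundedDifferences G D) :
    HasBoundedDifferences (fun i => (∑ a, G (Fin.cons a i)) / Fintype.card α) D := by
  intro p i j hij
  refine abs_sum_div_card_sub_sum_div_card_le fun a => hG p.succ _ _ fun q hq => ?_
  induction q using Fin.cases with
  | zero => rfl
  | succ q => exact hij q fun h => hq (h ▸ rfl)

lemma abs_sub_headAverage_le (hG : HasBoundedDifferences G D) (a : α) (i : Fin m → α) :
    |G (Fin.cons a i) - (∑ b, G (Fin.cons b i)) / Fintype.card α| ≤ D := by
  have hN : (Fintype.card α : ℝ) ≠ 0 := by exact_mod_cast Fintype.card_ne_zero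
  have := abs_sum_div_card_sub_sum_div_card_le (f := fun _ => G (Fin.cons a i))
    (g := fun b => G (Fin.cons b i)) fun b => hG 0 _ _ fun q hq => by
      induction q using Fin.cases with
      | zero => exact absurd rfl hq
      | succ q => rfl
  rwa [sum_const, card_univ, nsmul_eq_mul, mul_div_cancel_left₀ _ hN] at this

end HasBoundedDifferences

/-- The exponential-moment bound behind McDiarmid's inequality, for the uniform distribution
on `Fin m → α`. -/
lemma sum_exp_mul_le_of_hasBoundedDifferences {D t : ℝ} (ht : |t| * D ≤ 1) {m : ℕ}
    {G : (Fin m → α) → ℝ} (hG : HasBoundedDifferences G D) :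
    ∑ i, Real.exp (t * G i) ≤ (Fintype.card α : ℝ) ^ m *
      Real.exp (t * ((∑ i, G i) / (Fintype.card α : ℝ) ^ m) + m * (t ^ 2 * D ^ 2)) := by
  induction m with
  | zero => simp
  | succ m ih =>
    set N : ℝ := (Fintype.card α : ℝ)
    have hN : 0 < N := Nat.cast_pos.2 Fintype.card_pos
    set h : (Fin m → α) → ℝ := fun i => (∑ a, G (Fin.cons a i)) / N
    have hfiber : ∀ i, ∑ a, Real.exp (t * G (Fin.cons a i)) ≤
        N * Real.exp (t ^ 2 * D ^ 2) * Real.exp (t * h i) := by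
      intro i
      have hcentered : ∑ a, (G (Fin.cons a i) - h i) = 0 := by
        rw [sum_sub_distrib, sum_const, card_univ, nsmul_eq_mul, mul_div_cancel₀ _ hN.ne', sub_self]
      calc ∑ a, Real.exp (t * G (Fin.cons a i))
          = (∑ a, Real.exp (t * (G (Fin.cons a i) - h i))) * Real.exp (t * h i) := by
            rw [sum_mul]
            refine sum_congr rfl fun a _ => ?_
            rw [← Real.exp_add]
            ring_nf
        _ ≤ N * Real.exp (t ^ 2 * D ^ 2) * Real.exp (t * h i) := by
            gcongr
            exact sum_exp_mul_le_of_sum_eq_zero hcentered (hG.abs_sub_headAverage_le · i) ht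
    have hmean : ∑ i, h i = (∑ i, G i) / N := by
      rw [sum_pi_fin_succ G, sum_comm, sum_div]
    calc ∑ i, Real.exp (t * G i)
        = ∑ i : Fin m → α, ∑ a, Real.exp (t * G (Fin.cons a i)) := by
          rw [sum_pi_fin_succ, sum_comm]
      _ ≤ ∑ i, N * Real.exp (t ^ 2 * D ^ 2) * Real.exp (t * h i) := sum_le_sum fun i _ => hfiber i
      _ = N * Real.exp (t ^ 2 * D ^ 2) * ∑ i, Real.exp (t * h i) := by rw [mul_sum]
      _ ≤ N * Real.exp (t ^ 2 * D ^ 2) *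
            (N ^ m * Real.exp (t * ((∑ i, h i) / N ^ m) + m * (t ^ 2 * D ^ 2))) := by
          gcongr
          exact ih hG.headAverage
      _ = N ^ (m + 1) *
            Real.exp (t * ((∑ i, G i) / N ^ (m + 1)) + ↑(m + 1) * (t ^ 2 * D ^ 2)) := by
          rw [hmean, div_div, ← pow_succ', mul_mul_mul_comm, ← Real.exp_add, ← pow_succ']
          push_cast
          ring_nf

/-- McDiarmid's inequality, in counting form. -/
lemma card_le_le_exp_of_hasBoundedDifferences {m : ℕ} (hm : 0 < m) {G : (Fin m → α) → ℝ}
    {D μ s : ℝ} (hD : 0 < D) (hG : HasBoundedDifferences G D)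
    (hμ : (∑ i, G i) / (Fintype.card α : ℝ) ^ m ≤ μ) (hs0 : 0 ≤ s) (hs : s ≤ 2 * m * D) :
    (#{i | μ + s ≤ G i} : ℝ) ≤ (Fintype.card α : ℝ) ^ m * Real.exp (-s ^ 2 / (4 * m * D ^ 2)) := by
  set N : ℝ := (Fintype.card α : ℝ)
  have hm' : (0 : ℝ) < m := by exact_mod_cast hm
  set t := s / (2 * m * D ^ 2) with ht_def
  have ht0 : 0 ≤ t := by positivity
  have ht : |t| * D ≤ 1 := by
    rw [abs_of_nonneg ht0, div_mul_eq_mul_div, div_le_one (by positivity)]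
    nlinarith
  have hmarkov : (#{i | μ + s ≤ G i} : ℝ) * Real.exp (t * (μ + s)) ≤ ∑ i, Real.exp (t * G i) := by
    rw [← nsmul_eq_mul]
    refine (card_nsmul_le_sum _ _ _ fun i hi => ?_).trans
      (sum_le_sum_of_subset_of_nonneg (filter_subset _ _) fun _ _ _ => (Real.exp_pos _).le)
    gcongr
    exact (mem_filter.1 hi).2
  have hmgf : ∑ i, Real.exp (t * G i) ≤ N ^ m * Real.exp (t * μ + m * (t ^ 2 * D ^ 2)) := by
    refine (sum_exp_mul_le_of_hasBoundedDifferences ht hG).trans ?_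
    gcongr
  have hexp : Real.exp (t * μ + m * (t ^ 2 * D ^ 2)) =
      Real.exp (-s ^ 2 / (4 * m * D ^ 2)) * Real.exp (t * (μ + s)) := by
    rw [← Real.exp_add]
    congr 1
    rw [ht_def]
    field_simp
    ring
  rw [hexp, ← mul_assoc] at hmgf
  exact le_of_mul_le_mul_right (hmarkov.trans hmgf) (Real.exp_pos _)

end Counting

lemma hasBoundedDifferences_norm_sum {α V : Type*} [SeminormedAddCommGroup V] {ξ : α → V} {B : ℝ}
    (hB : ∀ a, ‖ξ a‖ ≤ B) (m : ℕ) :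
    HasBoundedDifferences (fun i : Fin m → α => ‖∑ p, ξ (i p)‖) (2 * B) := by
  intro p i j hij
  have hdiff : ∑ q, ξ (i q) - ∑ q, ξ (j q) = ξ (i p) - ξ (j p) := by
    rw [← sum_sub_distrib, sum_eq_single p (fun q _ hq => by rw [hij q hq, sub_self])
      (fun h => absurd (mem_univ p) h)]
  calc |‖∑ q, ξ (i q)‖ - ‖∑ q, ξ (j q)‖| ≤ ‖∑ q, ξ (i q) - ∑ q, ξ (j q)‖ := abs_norm_sub_norm_le _ _
    _ ≤ ‖ξ (i p)‖ + ‖ξ (j p)‖ := hdiff ▸ norm_sub_le _ _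
    _ ≤ 2 * B := by linarith [hB (i p), hB (j p)]

section Centering

variable {α E : Type*} [Fintype α] [SeminormedAddCommGroup E] [NormedSpace ℝ E]

lemma sum_sub_inv_card_smul_sum [Nonempty α] (f : α → E) :
    ∑ b, (f b - (Fintype.card α : ℝ)⁻¹ • ∑ c, f c) = 0 := by
  have hN : (Fintype.card α : ℝ) ≠ 0 := Nat.cast_ne_zero.2 Fintype.card_ne_zero
  rw [sum_sub_distrib, sum_const, card_univ, ← Nat.cast_smul_eq_nsmul ℝ, smul_smul,
    mul_inv_cancel₀ hN, one_smul, sub_self]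

lemma norm_sub_inv_card_smul_sum_le {f : α → E} {C : ℝ} (hf : ∀ b, ‖f b‖ ≤ C) (b : α) :
    ‖f b - (Fintype.card α : ℝ)⁻¹ • ∑ c, f c‖ ≤ 2 * C := by
  have : Nonempty α := ⟨b⟩
  have hN : (Fintype.card α : ℝ) ≠ 0 := Nat.cast_ne_zero.2 Fintype.card_ne_zero
  have hmean : ‖(Fintype.card α : ℝ)⁻¹ • ∑ c, f c‖ ≤ C := by
    rw [norm_smul, norm_inv, RCLike.norm_natCast]
    calc (Fintype.card α : ℝ)⁻¹ * ‖∑ c, f c‖ ≤ (Fintype.card α : ℝ)⁻¹ * (Fintype.card α * C) := by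
          gcongr
          exact (norm_sum_le _ _).trans ((sum_le_sum fun c _ => hf c).trans_eq (by simp))
      _ = C := inv_mul_cancel_left₀ hN C
  linarith [norm_sub_le (f b) ((Fintype.card α : ℝ)⁻¹ • ∑ c, f c), hf b]

end Centering

section Norms

variable {α : Type*} [Fintype α] {V : Type*} [NormedAddCommGroup V] [InnerProductSpace ℝ V]
  {ξ : α → V} {B : ℝ}

lemma sum_norm_sum_sq_le (hξ : ∑ a, ξ a = 0) (hB : ∀ a, ‖ξ a‖ ≤ B) (m : ℕ) :
    ∑ i : Fin m → α, ‖∑ p, ξ (i p)‖ ^ 2 ≤ (Fintype.card α : ℝ) ^ m * (m * B ^ 2) := by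
  induction m with
  | zero => simp
  | succ m ih =>
    set N : ℝ := (Fintype.card α : ℝ)
    set S : (Fin m → α) → V := fun i => ∑ p, ξ (i p)
    have hsplit : ∀ a i, ‖∑ p, ξ ((Fin.cons a i : Fin (m + 1) → α) p)‖ ^ 2 =
        ‖ξ a‖ ^ 2 + 2 * inner ℝ (ξ a) (S i) + ‖S i‖ ^ 2 := by
      intro a i
      rw [Fin.sum_univ_succ]
      exact norm_add_sq_real _ _
    have hcross : ∑ a, ∑ i, 2 * inner ℝ (ξ a) (S i) = 0 := by
      simp_rw [← mul_sum, ← inner_sum, ← sum_inner, hξ, inner_zero_left, mul_zero]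
    have hsq : ∑ a, ‖ξ a‖ ^ 2 ≤ N * B ^ 2 := by
      calc ∑ a, ‖ξ a‖ ^ 2 ≤ ∑ _a : α, B ^ 2 :=
            sum_le_sum fun a _ => pow_le_pow_left₀ (norm_nonneg _) (hB a) 2
        _ = N * B ^ 2 := by rw [sum_const, card_univ, nsmul_eq_mul]
    calc ∑ i : Fin (m + 1) → α, ‖∑ p, ξ (i p)‖ ^ 2
        = ∑ a, ∑ i : Fin m → α, (‖ξ a‖ ^ 2 + 2 * inner ℝ (ξ a) (S i) + ‖S i‖ ^ 2) := by
          rw [sum_pi_fin_succ]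
          simp_rw [hsplit]
      _ = N ^ m * ∑ a, ‖ξ a‖ ^ 2 + N * ∑ i, ‖S i‖ ^ 2 := by
          simp only [sum_add_distrib, hcross, sum_const, card_univ, Fintype.card_fun,
            Fintype.card_fin, nsmul_eq_mul, mul_sum]
          push_cast
          ring
      _ ≤ N ^ m * (N * B ^ 2) + N * (N ^ m * (m * B ^ 2)) := by gcongr
      _ = N ^ (m + 1) * (↑(m + 1) * B ^ 2) := by push_cast; ring

lemma sum_norm_sum_div_le [Nonempty α] (hξ : ∑ a, ξ a = 0) (hB : ∀ a, ‖ξ a‖ ≤ B) (hB0 : 0 ≤ B)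
    (m : ℕ) :
    (∑ i : Fin m → α, ‖∑ p, ξ (i p)‖) / (Fintype.card α : ℝ) ^ m ≤ B * Real.sqrt m := by
  set N : ℝ := (Fintype.card α : ℝ)
  have hNm : 0 < N ^ m := pow_pos (Nat.cast_pos.2 Fintype.card_pos) m
  have hcs := sq_sum_le_card_mul_sum_sq (s := (univ : Finset (Fin m → α)))
    (f := fun i => ‖∑ p, ξ (i p)‖)
  rw [card_univ, Fintype.card_fun, Fintype.card_fin, Nat.cast_pow] at hcs
  refine le_of_pow_le_pow_left₀ two_ne_zero (by positivity) ?_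
  rw [div_pow, mul_pow, Real.sq_sqrt (Nat.cast_nonneg m), div_le_iff₀ (by positivity)]
  calc (∑ i : Fin m → α, ‖∑ p, ξ (i p)‖) ^ 2 ≤ N ^ m * ∑ i : Fin m → α, ‖∑ p, ξ (i p)‖ ^ 2 := hcs
    _ ≤ N ^ m * (N ^ m * (m * B ^ 2)) := by gcongr; exact sum_norm_sum_sq_le hξ hB m
    _ = B ^ 2 * m * (N ^ m) ^ 2 := by ring

lemma card_le_norm_sum_le [Nonempty α] (hξ : ∑ a, ξ a = 0) (hB : ∀ a, ‖ξ a‖ ≤ B) (hB0 : 0 < B)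
    {m : ℕ} {L : ℝ} (hL : 1 ≤ L) (hLm : L ≤ m) :
    (#{i : Fin m → α | 5 * B * Real.sqrt (m * L) ≤ ‖∑ p, ξ (i p)‖} : ℝ) ≤
      (Fintype.card α : ℝ) ^ m * Real.exp (-L) := by
  have hm : (0 : ℝ) < m := by linarith
  have hsqrt_m : Real.sqrt m ≤ Real.sqrt (m * L) :=
    Real.sqrt_le_sqrt (le_mul_of_one_le_right hm.le hL)
  have hsqrt_mL : Real.sqrt (m * L) ≤ m := by
    rw [Real.sqrt_le_left hm.le]
    nlinarith
  have hcount := card_le_le_exp_of_hasBoundedDifferences (Nat.cast_pos.1 hm) (by positivity)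
    (hasBoundedDifferences_norm_sum hB m) (sum_norm_sum_div_le hξ hB hB0.le m)
    (s := 4 * B * Real.sqrt (m * L)) (by positivity) (by nlinarith)
  have hexp : -(4 * B * Real.sqrt (m * L)) ^ 2 / (4 * m * (2 * B) ^ 2) = -L := by
    rw [mul_pow, Real.sq_sqrt (by positivity)]
    field_simp
    ring
  rw [hexp] at hcount
  refine le_trans (by gcongr; nlinarith) hcount

lemma card_mul_rpow_le_sum_rpow {α : Type*} [Fintype α] [Nonempty α] {u : α → ℝ}
    (hu : ∀ a, 0 ≤ u a) {p θ : ℝ} (hp : 1 ≤ p) (hθ : 0 ≤ θ)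
    (h : Fintype.card α * θ ≤ ∑ a, u a) :
    Fintype.card α * θ ^ p ≤ ∑ a, u a ^ p := by
  set N : ℝ := (Fintype.card α : ℝ)
  have hN : 0 < N := Nat.cast_pos.2 Fintype.card_pos
  have hpower := Real.rpow_sum_le_const_mul_sum_rpow_of_nonneg (s := univ) hp fun a _ => hu a
  rw [card_univ, Real.rpow_sub_one hN.ne', div_mul_eq_mul_div, le_div_iff₀ hN] at hpower
  have hmono : (N * θ) ^ p ≤ (∑ a, u a) ^ p := Real.rpow_le_rpow (by positivity) h (by linarith)
  rw [Real.mul_rpow hN.le hθ] at hmono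
  refine le_of_mul_le_mul_left ?_ (Real.rpow_pos_of_pos hN p)
  calc N ^ p * (N * θ ^ p) = N ^ p * θ ^ p * N := by ring
    _ ≤ (∑ a, u a) ^ p * N := by gcongr
    _ ≤ N ^ p * ∑ a, u a ^ p := hpower

section CenterMass

variable {E : Type*} [SeminormedAddCommGroup E] [NormedSpace ℝ E]

lemma norm_inv_smul_sub_inv_smul_le {S W c R : ℝ} {T V : E} (hS : 0 < S) (hW : 0 < W)
    (hV : ‖V‖ ≤ R * W) :
    ‖S⁻¹ • T - W⁻¹ • V‖ ≤ (‖T - c • V‖ + R * |S - c * W|) / S := by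
  have hcoef : S⁻¹ * c - W⁻¹ = (c * W - S) / (S * W) := by field_simp
  have hsplit : S⁻¹ • T - W⁻¹ • V = S⁻¹ • (T - c • V) + ((c * W - S) / (S * W)) • V := by
    rw [← hcoef, smul_sub, sub_smul, smul_smul]
    abel
  have hsecond : ‖((c * W - S) / (S * W)) • V‖ ≤ R * |S - c * W| / S := by
    rw [norm_smul, Real.norm_eq_abs, abs_div, abs_sub_comm, abs_of_pos (mul_pos hS hW)]
    calc |S - c * W| / (S * W) * ‖V‖ ≤ |S - c * W| / (S * W) * (R * W) := by gcongr
      _ = R * |S - c * W| / S := by field_simp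
  calc ‖S⁻¹ • T - W⁻¹ • V‖ ≤ ‖S⁻¹ • (T - c • V)‖ + ‖((c * W - S) / (S * W)) • V‖ := by
        rw [hsplit]; exact norm_add_le _ _
    _ ≤ ‖T - c • V‖ / S + R * |S - c * W| / S := by
        rw [norm_smul, Real.norm_eq_abs, abs_of_pos (inv_pos.2 hS), inv_mul_eq_div]
        gcongr
    _ = (‖T - c • V‖ + R * |S - c * W|) / S := by rw [add_div]

lemma norm_centerMass_sample_sub_le {α : Type*} [Fintype α] [Nonempty α] {m : ℕ} (hm : 0 < m)
    {w : α → ℝ} {x : α → E} {R ε θ : ℝ} (hw : ∀ b, 0 ≤ w b) (hx : ∀ b, ‖x b‖ ≤ R)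
    (hε : 0 < ε) (hεR : ε ≤ R) (hθ : 0 < θ) (hmass : Fintype.card α * θ ≤ ∑ b, w b)
    (i : Fin m → α)
    (hdev₁ : ‖∑ p, (w (i p) - (Fintype.card α : ℝ)⁻¹ • ∑ b, w b)‖ ≤ ε * θ * m / (4 * R))
    (hdev₂ : ‖∑ p, (w (i p) • x (i p) - (Fintype.card α : ℝ)⁻¹ • ∑ b, w b • x b)‖ ≤
      ε * θ * m / 4) :
    0 < ∑ p, w (i p) ∧
      ‖univ.centerMass (fun p => w (i p)) (fun p => x (i p)) - univ.centerMass w x‖ ≤ ε := by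
  set N : ℝ := (Fintype.card α : ℝ)
  have hN : 0 < N := Nat.cast_pos.2 Fintype.card_pos
  have hm' : (0 : ℝ) < m := Nat.cast_pos.2 hm
  have hR : 0 < R := hε.trans_le hεR
  set W := ∑ b, w b
  set S := ∑ p, w (i p)
  have hW : 0 < W := (by positivity : 0 < N * θ).trans_le hmass
  have hV : ‖∑ b, w b • x b‖ ≤ R * W := by
    calc ‖∑ b, w b • x b‖ ≤ ∑ b, ‖w b • x b‖ := norm_sum_le _ _
      _ ≤ ∑ b, R * w b := sum_le_sum fun b _ => by
          rw [norm_smul, Real.norm_of_nonneg (hw b), mul_comm]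
          exact mul_le_mul_of_nonneg_right (hx b) (hw b)
      _ = R * W := by rw [mul_sum]
  have hS_dev : |S - m / N * W| ≤ ε * θ * m / (4 * R) := by
    rw [← Real.norm_eq_abs]
    convert hdev₁ using 2
    rw [sum_sub_distrib, sum_const, card_univ, Fintype.card_fin, nsmul_eq_mul, smul_eq_mul]
    ring
  have hT_dev : ‖∑ p, w (i p) • x (i p) - (m / N) • ∑ b, w b • x b‖ ≤ ε * θ * m / 4 := by
    convert hdev₂ using 2
    rw [sum_sub_distrib, sum_const, card_univ, Fintype.card_fin, ← Nat.cast_smul_eq_nsmul ℝ,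
      smul_smul, div_eq_mul_inv]
  have hS_low : 3 / 4 * (m * θ) ≤ S := by
    have hcW : m * θ ≤ m / N * W := by
      rw [div_mul_eq_mul_div, le_div_iff₀ hN]
      nlinarith
    have hdev_small : ε * θ * m / (4 * R) ≤ m * θ / 4 := by
      rw [div_le_div_iff₀ (by positivity) (by positivity)]
      nlinarith [mul_pos hθ hm']
    linarith [(abs_le.1 hS_dev).1]
  have hS : 0 < S := (by positivity : (0 : ℝ) < 3 / 4 * (m * θ)).trans_le hS_low
  refine ⟨hS, (norm_inv_smul_sub_inv_smul_le (c := m / N) hS hW hV).trans ?_⟩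
  rw [div_le_iff₀ hS]
  calc ‖∑ p, w (i p) • x (i p) - (m / N) • ∑ b, w b • x b‖ + R * |S - m / N * W|
      ≤ ε * θ * m / 4 + R * (ε * θ * m / (4 * R)) := by gcongr
    _ = 2 / 3 * ε * (3 / 4 * (m * θ)) := by field_simp; ring
    _ ≤ ε * S := by nlinarith

end CenterMass

section Sampling

variable {Ω α : Type*} [MeasurableSpace Ω] {P : Measure Ω} [Fintype α] [Nonempty α] {m : ℕ}
  {I : Fin m → Ω → α}

lemma measure_tuple_mem_le (hI : iIndepFun (m := fun _ => (⊤ : MeasurableSpace α)) I P)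
    (hunif : ∀ p a, P {ω | I p ω = a} = 1 / (Fintype.card α : ℝ≥0∞))
    (E : Finset (Fin m → α)) :
    P {ω | (fun p => I p ω) ∈ E} ≤ ENNReal.ofReal (#E / (Fintype.card α : ℝ) ^ m) := by
  have hatom : ∀ i : Fin m → α,
      P {ω | (fun p => I p ω) = i} = (1 / (Fintype.card α : ℝ≥0∞)) ^ m := by
    intro i
    have hinter : {ω | (fun p => I p ω) = i} = ⋂ p ∈ (univ : Finset (Fin m)), I p ⁻¹' {i p} := by
      ext ω
      simp [funext_iff]
    rw [hinter, hI.measure_inter_preimage_eq_mul univ (fun _ _ => trivial)]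
    simp only [Set.preimage, Set.mem_singleton_iff, hunif, prod_const, card_univ,
      Fintype.card_fin]
  have hcover : {ω | (fun p => I p ω) ∈ E} ⊆ ⋃ i ∈ E, {ω | (fun p => I p ω) = i} :=
    fun ω hω => Set.mem_biUnion hω rfl
  calc P {ω | (fun p => I p ω) ∈ E} ≤ ∑ i ∈ E, P {ω | (fun p => I p ω) = i} :=
        (measure_mono hcover).trans (measure_biUnion_finset_le _ _)
    _ = ENNReal.ofReal (#E / (Fintype.card α : ℝ) ^ m) := by
        rw [sum_congr rfl fun i _ => hatom i, sum_const, nsmul_eq_mul,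
          ENNReal.ofReal_div_of_pos (by positivity), ENNReal.ofReal_natCast,
          ENNReal.ofReal_pow (Nat.cast_nonneg _), ENNReal.ofReal_natCast, one_div,
          ← ENNReal.inv_pow, div_eq_mul_inv]

lemma ofReal_one_sub_sum_le_measure_forall [IsProbabilityMeasure P]
    (hI : iIndepFun (m := fun _ => (⊤ : MeasurableSpace α)) I P)
    (hunif : ∀ p a, P {ω | I p ω = a} = 1 / (Fintype.card α : ℝ≥0∞))
    {ι : Type*} [Fintype ι] {Good : ι → (Fin m → α) → Prop} [∀ j, DecidablePred (Good j)]
    {η : ι → ℝ} (hbad : ∀ j, (#{i | ¬ Good j i} : ℝ) ≤ (Fintype.card α : ℝ) ^ m * η j) :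
    ENNReal.ofReal (1 - ∑ j, η j) ≤ P {ω | ∀ j, Good j fun p => I p ω} := by
  have hNm : (0 : ℝ) < (Fintype.card α : ℝ) ^ m := pow_pos (Nat.cast_pos.2 Fintype.card_pos) m
  have hη : ∀ j, 0 ≤ η j := fun j =>
    nonneg_of_mul_nonneg_right ((Nat.cast_nonneg _).trans (hbad j)) hNm
  have hP_bad : ∀ j, P {ω | ¬ Good j fun p => I p ω} ≤ ENNReal.ofReal (η j) := fun j => by
    calc P {ω | ¬ Good j fun p => I p ω}
        = P {ω | (fun p => I p ω) ∈ ({i | ¬ Good j i} : Finset _)} := by simp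
      _ ≤ ENNReal.ofReal (η j) := (measure_tuple_mem_le hI hunif _).trans
          (ENNReal.ofReal_le_ofReal ((div_le_iff₀' hNm).2 (hbad j)))
  have hcover : 1 ≤ P {ω | ∀ j, Good j fun p => I p ω} +
      ∑ j, P {ω | ¬ Good j fun p => I p ω} := by
    rw [← measure_univ (μ := P)]
    refine (measure_mono (t := {ω | ∀ j, Good j fun p => I p ω} ∪
      ⋃ j, {ω | ¬ Good j fun p => I p ω}) fun ω _ => ?_).trans
      ((measure_union_le _ _).trans (by gcongr; exact measure_iUnion_fintype_le _ _))
    by_cases h : ∀ j, Good j fun p => I p ω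
    · exact Or.inl h
    · exact Or.inr (Set.mem_iUnion.2 (not_forall.1 h))
  rw [ENNReal.ofReal_sub _ (sum_nonneg fun j _ => hη j), ENNReal.ofReal_sum_of_nonneg
    fun j _ => hη j, ENNReal.ofReal_one, tsub_le_iff_right]
  exact hcover.trans (by gcongr with j; exact hP_bad j)

end Sampling

lemma card_not_centerMass_sample_close_le {V : Type*} [NormedAddCommGroup V]
    [InnerProductSpace ℝ V] {α : Type*} [Fintype α] [Nonempty α] {w : α → ℝ} {x : α → V}
    {R ε θ L : ℝ} {m : ℕ} (hw : ∀ b, w b ∈ Set.Icc (0 : ℝ) 1) (hx : ∀ b, ‖x b‖ ≤ R)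
    (hε : 0 < ε) (hεR : ε ≤ R) (hθ : 0 < θ) (hmass : Fintype.card α * θ ≤ ∑ b, w b)
    (hL : 1 ≤ L) (hm : 1600 * L ≤ (ε * θ / R) ^ 2 * m) :
    (#{i : Fin m → α | ¬ (0 < ∑ p, w (i p) ∧
        ‖univ.centerMass (fun p => w (i p)) (fun p => x (i p)) - univ.centerMass w x‖ ≤ ε)} : ℝ) ≤
      (Fintype.card α : ℝ) ^ m * (2 * Real.exp (-L)) := by
  classical
  set N : ℝ := (Fintype.card α : ℝ)
  have hR : 0 < R := hε.trans_le hεR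
  set q := ε * θ / R
  have hθ1 : θ ≤ 1 := by
    refine le_of_mul_le_mul_left (hmass.trans ?_) (Nat.cast_pos.2 Fintype.card_pos)
    exact (sum_le_sum fun b _ => (hw b).2).trans_eq (by simp [N])
  have hq1 : q ≤ 1 := by rw [div_le_one hR]; nlinarith
  have hm_pos : (0 : ℝ) < m := by nlinarith [sq_nonneg q]
  have hLm : L ≤ m := by nlinarith [pow_le_one₀ (by positivity : 0 ≤ q) hq1 (n := 2)]
  -- the choice of `1600` makes both tail thresholds `10 C √(m L)` below the allowed deviations
  have hsqrt : Real.sqrt (m * L) ≤ q * m / 40 := by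
    rw [Real.sqrt_le_left (by positivity)]
    nlinarith
  have hqm : 0 ≤ q * m := by positivity
  have hw_norm : ∀ b, ‖w b‖ ≤ 1 := fun b => by
    rw [Real.norm_of_nonneg (hw b).1]; exact (hw b).2
  have hwx_norm : ∀ b, ‖w b • x b‖ ≤ R := fun b => by
    rw [norm_smul]
    exact (mul_le_mul (hw_norm b) (hx b) (norm_nonneg _) zero_le_one).trans_eq (one_mul R)
  set E₁ : Finset (Fin m → α) :=
    {i | 5 * (2 * 1) * Real.sqrt (m * L) ≤ ‖∑ p, (w (i p) - N⁻¹ • ∑ b, w b)‖}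
  set E₂ : Finset (Fin m → α) :=
    {i | 5 * (2 * R) * Real.sqrt (m * L) ≤ ‖∑ p, (w (i p) • x (i p) - N⁻¹ • ∑ b, w b • x b)‖}
  have hbad_sub : ({i | ¬ (0 < ∑ p, w (i p) ∧
      ‖univ.centerMass (fun p => w (i p)) (fun p => x (i p)) - univ.centerMass w x‖ ≤ ε)} :
        Finset (Fin m → α)) ⊆ E₁ ∪ E₂ := by
    intro i hi
    simp only [E₁, E₂, mem_union, mem_filter, mem_univ, true_and] at hi ⊢
    by_contra! hclose
    refine hi (norm_centerMass_sample_sub_le (Nat.cast_pos.1 hm_pos) (fun b => (hw b).1) hx hε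
      hεR hθ hmass i (hclose.1.le.trans ?_) (hclose.2.le.trans ?_))
    · rw [show ε * θ * m / (4 * R) = q * m / 4 by simp only [q]; field_simp]
      linarith
    · rw [show ε * θ * m / 4 = R * (q * m / 4) by simp only [q]; field_simp]
      nlinarith
  calc _ ≤ (#(E₁ ∪ E₂) : ℝ) := by exact_mod_cast card_le_card hbad_sub
    _ ≤ N ^ m * Real.exp (-L) + N ^ m * Real.exp (-L) := by
        refine (Nat.cast_le.2 (card_union_le _ _)).trans ?_
        push_cast
        gcongr
        · exact card_le_norm_sum_le (sum_sub_inv_card_smul_sum w)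
            (norm_sub_inv_card_smul_sum_le hw_norm) (by norm_num) hL hLm
        · exact card_le_norm_sum_le (sum_sub_inv_card_smul_sum _)
            (norm_sub_inv_card_smul_sum_le hwx_norm) (by positivity) hL hLm
    _ = N ^ m * (2 * Real.exp (-L)) := by ring

lemma one_le_log_two_mul {r : ℝ} (hr : 2 ≤ r) : 1 ≤ Real.log (2 * r) := by
  rw [Real.le_log_iff_exp_le (by positivity)]
  linarith [Real.exp_one_lt_d9]

lemma log_two_mul_le_of_sample_size {q r m : ℝ} (hq0 : 0 < q) (hq1 : q ≤ 1) (hr : 2 ≤ r)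
    (hm : 3200 * q⁻¹ ^ 4 * Real.log r ≤ m) : 1600 * Real.log (2 * r) ≤ q ^ 2 * m := by
  have hlog : Real.log (2 * r) ≤ 2 * Real.log r := by
    rw [Real.log_mul two_ne_zero (by positivity)]
    linarith [Real.log_le_log two_pos hr]
  have hlog0 : 0 ≤ Real.log r := Real.log_nonneg (by linarith)
  have hinv : 1 ≤ q⁻¹ ^ 2 := one_le_pow₀ (one_le_inv₀ hq0 |>.2 hq1)
  calc 1600 * Real.log (2 * r) ≤ 3200 * Real.log r := by linarith
    _ ≤ 3200 * q⁻¹ ^ 2 * Real.log r := by nlinarith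
    _ = q ^ 2 * (3200 * q⁻¹ ^ 4 * Real.log r) := by field_simp
    _ ≤ q ^ 2 * m := by gcongr

/-- Lemma (estimate of all cluster means): there is an absolute constant `c > 0` such
that, if every cluster membership size is at least `βn/k` and the uniform sample size
satisfies `m ≥ c (Rk^α/(εβ^α))⁴ log(k/δ)`, then with probability at least `1 - δ` all
the self-normalized center estimates are within `ε` of the true centers. -/
theorem all_means_estimate :
    ∃ c : ℝ, 0 < c ∧
      ∀ (d n k : ℕ), 1 ≤ d → 1 ≤ n → 1 ≤ k →
      ∀ (R α β δ ε : ℝ), 0 < R → 1 ≤ α → β ∈ Set.Ioc (0 : ℝ) 1 →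
        δ ∈ Set.Ioo (0 : ℝ) (1 / 2) → ε ∈ Set.Ioc (0 : ℝ) R →
      ∀ (x : Fin n → EuclideanSpace ℝ (Fin d)),
        (∀ i, x i ∈ Metric.closedBall (0 : EuclideanSpace ℝ (Fin d)) R) →
      ∀ (U : Fin n → Fin k → ℝ),
        (∀ i j, U i j ∈ Set.Icc (0 : ℝ) 1) →
        (∀ i, ∑ j, U i j = 1) →
        (∀ j : Fin k, β * n / k ≤ ∑ i, U i j) →
      ∀ m : ℕ,
        c * (R * (k : ℝ) ^ α / (ε * β ^ α)) ^ 4 * Real.log (k / δ) ≤ (m : ℝ) →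
      ∀ (Ω : Type) (_ : MeasurableSpace Ω) (P : Measure Ω),
        IsProbabilityMeasure P →
      ∀ I : Fin m → Ω → Fin n,
        iIndepFun (m := fun _ => (⊤ : MeasurableSpace (Fin n))) I P →
        (∀ (p : Fin m) (i : Fin n), P {ω | I p ω = i} = 1 / (n : ENNReal)) →
      ENNReal.ofReal (1 - δ) ≤
        P {ω | ∀ j : Fin k, 0 < ∑ p, U (I p ω) j ^ α ∧
          ‖((∑ p, U (I p ω) j ^ α)⁻¹ • ∑ p, (U (I p ω) j ^ α) • x (I p ω)) -
            ((∑ i, U i j ^ α)⁻¹ • ∑ i, (U i j ^ α) • x i)‖ ≤ ε} := by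
  refine ⟨3200, by norm_num, ?_⟩
  intro d n k _ hn hk R α β δ ε hR hα ⟨hβ0, hβ1⟩ ⟨hδ0, hδ⟩ ⟨hε0, hεR⟩ x hx U hU _ hUcol m hm
    Ω _ P _ I hI hunif
  have : Nonempty (Fin n) := ⟨⟨0, hn⟩⟩
  have hk0 : (0 : ℝ) < k := Nat.cast_pos.2 hk
  set θ := (β / k) ^ α
  have hθ : 0 < θ := Real.rpow_pos_of_pos (by positivity) α
  have hθ1 : θ ≤ 1 :=
    Real.rpow_le_one (by positivity) (div_le_one_of_le₀ (hβ1.trans (Nat.one_le_cast.2 hk)) hk0.le)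
      (by linarith)
  have hkδ : 2 ≤ k / δ := by
    rw [le_div_iff₀ hδ0]; nlinarith [(Nat.one_le_cast.2 hk : (1 : ℝ) ≤ k)]
  have hscale : R * (k : ℝ) ^ α / (ε * β ^ α) = (ε * θ / R)⁻¹ := by
    rw [show θ = β ^ α / k ^ α from Real.div_rpow hβ0.le hk0.le α]
    field_simp
  have hsample := log_two_mul_le_of_sample_size (by positivity)
    ((div_le_one hR).2 (by nlinarith)) hkδ (hscale ▸ hm)
  have hbad : ∀ j : Fin k, _ := fun j => card_not_centerMass_sample_close_le
    (w := fun i => U i j ^ α) (fun i => ⟨Real.rpow_nonneg (hU i j).1 α,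
      Real.rpow_le_one (hU i j).1 (hU i j).2 (by linarith)⟩)
    (fun i => mem_closedBall_zero_iff.1 (hx i)) hε0 hεR hθ
    (card_mul_rpow_le_sum_rpow (fun i => (hU i j).1) hα (by positivity) (by
      rw [Fintype.card_fin, ← mul_div_assoc, mul_comm (n : ℝ)]; exact hUcol j))
    (one_le_log_two_mul hkδ) hsample
  have hδ_sum : ∑ _j : Fin k, 2 * Real.exp (-Real.log (2 * (k / δ))) = δ := by
    rw [Real.exp_neg, Real.exp_log (by positivity), sum_const, card_univ, Fintype.card_fin,
      nsmul_eq_mul]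
    field_simp
  have hprob := ofReal_one_sub_sum_le_measure_forall (Good := fun j i =>
    0 < ∑ p, U (i p) j ^ α ∧ ‖univ.centerMass (fun p => U (i p) j ^ α) (fun p => x (i p)) -
      univ.centerMass (fun i => U i j ^ α) x‖ ≤ ε) hI (by simpa using hunif) hbad
  rw [hδ_sum] at hprob
  exact hprob
end Norms
end
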